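/- arXiv:1005.1328 — 4 statements merged into one kernel-verified Lean document; each statement's English description precedes it below -/
import Mathlib

section
/- No P_7-free and C_4-free bipartite graph contains P_9 as a (not necessarily induced) subgraph; that is, no such graph contains nine distinct vertices a_1, ..., a_9 with a_i adjacent to a_{i+1} for i = 1, ..., 8. -/
/-- `H` is (isomorphic to) an induced subgraph of `G`. -/
def IsInducedSubgraph {α β : Type*} (H : SimpleGraph α) (G : SimpleGraph β) : Prop :=
  ∃ f : α → β, Function.Injective f ∧ ∀ u v, G.Adj (f u) (f v) ↔ H.Adj u v

/-- `H` is (isomorphic to) a not necessarily induced subgraph of `G`. -/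
def IsSubgraphOf {α β : Type*} (H : SimpleGraph α) (G : SimpleGraph β) : Prop :=
  ∃ f : α → β, Function.Injective f ∧ ∀ u v, H.Adj u v → G.Adj (f u) (f v)

/-- `G` contains no induced subgraph isomorphic to `H`. -/
def HFree {α β : Type*} (H : SimpleGraph α) (G : SimpleGraph β) : Prop :=
  ¬ IsInducedSubgraph H G

/-- A graph is bipartite if its vertex set splits into two independent sets. -/
def IsBipartite {V : Type*} (G : SimpleGraph V) : Prop :=
  ∃ c : V → Bool, ∀ u v, G.Adj u v → c u ≠ c v

/-- The chordless path `P_k` on `k` vertices. -/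
def pathN (k : ℕ) : SimpleGraph (Fin k) :=
  SimpleGraph.fromRel (fun u v => u.val + 1 = v.val)

/-- The chordless cycle `C_4`. -/
def c4 : SimpleGraph (Fin 4) :=
  SimpleGraph.fromRel (fun u v => (u.val, v.val) ∈ [(0,1),(1,2),(2,3),(3,0)])

/-- `Sun_1`: a `C_4` (on 0,1,2,3) with one pendant vertex 4 attached to 0. -/
def sun1 : SimpleGraph (Fin 5) :=
  SimpleGraph.fromRel (fun u v => (u.val, v.val) ∈ [(0,1),(1,2),(2,3),(3,0),(0,4)])

/-- `Sun_4`: a `C_4` (on 0,1,2,3) with pendant vertices 4,5,6,7 attached to 0,1,2,3. -/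
def sun4 : SimpleGraph (Fin 8) :=
  SimpleGraph.fromRel (fun u v =>
    (u.val, v.val) ∈ [(0,1),(1,2),(2,3),(3,0),(0,4),(1,5),(2,6),(3,7)])

/-- `2P_3`: the disjoint union of two chordless paths on 3 vertices. -/
def twoP3 : SimpleGraph (Fin 6) :=
  SimpleGraph.fromRel (fun u v => (u.val, v.val) ∈ [(0,1),(1,2),(3,4),(4,5)])

/-- `S_{1,2,3}`: the 7-vertex tree with one degree-3 vertex (vertex 0) whose three
leaves (1, 3, 6) are at distances 1, 2 and 3 from it. -/
def s123 : SimpleGraph (Fin 7) :=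
  SimpleGraph.fromRel (fun u v => (u.val, v.val) ∈ [(0,1),(0,2),(2,3),(0,4),(4,5),(5,6)])

/-- The bipartite complement of `P_8` (vertices `0..7`, path edges `i (i+1)`,
parts = even vertices / odd vertices): an even and an odd vertex are adjacent
iff they are not consecutive. -/
def p8tilde : SimpleGraph (Fin 8) :=
  SimpleGraph.fromRel (fun u v =>
    u.val % 2 = 0 ∧ v.val % 2 = 1 ∧ u.val + 1 ≠ v.val ∧ v.val + 1 ≠ u.val)

/-- The T-graph `T_π` for a permutation (given as a map) `π` of `Fin n`.
Vertices: `A ⊕ B ⊕ C ⊕ D`, with edges exactly: `a_i b_{π(i)}`; all `c_i d_j`;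
`a_i d_j` for `j ≤ i`; `b_i c_j` for `j ≤ i`. -/
def Tgraph {n : ℕ} (π : Fin n → Fin n) : SimpleGraph (Fin n ⊕ Fin n ⊕ Fin n ⊕ Fin n) :=
  SimpleGraph.fromRel (fun u v =>
    match u, v with
    | Sum.inl i, Sum.inr (Sum.inl j) => π i = j
    | Sum.inr (Sum.inr (Sum.inl _)), Sum.inr (Sum.inr (Sum.inr _)) => True
    | Sum.inl i, Sum.inr (Sum.inr (Sum.inr j)) => j ≤ i
    | Sum.inr (Sum.inl i), Sum.inr (Sum.inr (Sum.inl j)) => j ≤ i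
    | _, _ => False)

/-- The S-graph for witnessing (convex) permutations `μ, ρ` of a biconvex
permutation `π = μ ∘ ρ⁻¹`. Vertices: `A ⊕ B ⊕ C`, edges exactly:
`b_i a_j` for `j ≤ ρ(i)` and `b_i c_j` for `j ≤ μ(i)`. -/
def Sgraph {n : ℕ} (μ ρ : Fin n → Fin n) : SimpleGraph (Fin n ⊕ Fin n ⊕ Fin n) :=
  SimpleGraph.fromRel (fun u v =>
    match u, v with
    | Sum.inr (Sum.inl i), Sum.inl j => j ≤ ρ i
    | Sum.inr (Sum.inl i), Sum.inr (Sum.inr j) => j ≤ μ i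
    | _, _ => False)

/-- The permutation graph of `π`: `i ~ j` iff `(i - j)(π(i) - π(j)) < 0`. -/
def permGraph {n : ℕ} (π : Fin n → Fin n) : SimpleGraph (Fin n) :=
  SimpleGraph.fromRel (fun u v => u < v ∧ π v < π u)

/-- The universal graph `H_{k,n}`: vertex `(i,j)` is adjacent to `(i+1,j')` iff `j' ≤ j`. -/
def Hgraph (k n : ℕ) : SimpleGraph (Fin k × Fin n) :=
  SimpleGraph.fromRel (fun u v => v.1.val = u.1.val + 1 ∧ v.2.val ≤ u.2.val)

/-- Pattern containment of (one-line) sequences: `π` is contained in `ρ` if `ρ` has a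
subsequence order-isomorphic to `π`. -/
def Contained {m n : ℕ} (π : Fin m → ℕ) (ρ : Fin n → ℕ) : Prop :=
  ∃ f : Fin m → Fin n, StrictMono f ∧ ∀ i j, π i ≤ π j ↔ ρ (f i) ≤ ρ (f j)

/-- Value at (1-indexed) position `p` of the one-line notation of the permutation
`π*_n = (4, 2, 6, 1, 8, 3, …, 2j, 2j−5, …, n−1, n−3)` of Section 2.1. -/
def pistarVal (n p : ℕ) : ℕ :=
  if p = 1 then 4
  else if p = 2 then 2
  else if p = n - 1 then n - 1
  else if p = n then n - 3
  else if p % 2 = 1 then p + 3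
  else p - 3

/-- `π*_n` of Section 2.1 as a (0-indexed) sequence of natural numbers. -/
def pistar (n : ℕ) : Fin n → ℕ := fun i => pistarVal n (i.val + 1)

/-- `π*_n` of Section 2.1 as a (0-indexed) map `Fin n → Fin n`. -/
def pistarFin (n : ℕ) : Fin n → Fin n :=
  fun i => ⟨(pistarVal n (i.val + 1) - 1) % n, Nat.mod_lt _ i.pos⟩

/-- Value at (1-indexed) position `p` of the one-line notation of the permutation
`π*_n = (2, 3, 5, 1, …, 2j+3, 2j, …, n, n−4, n−1, n−2)` of Section 2.2. -/
def pi2starVal (n p : ℕ) : ℕ :=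
  if p = 1 then 2
  else if p = 2 then 3
  else if p = 3 then 5
  else if p = 4 then 1
  else if p = n - 3 then n
  else if p = n - 2 then n - 4
  else if p = n - 1 then n - 1
  else if p = n then n - 2
  else if p % 2 = 1 then p + 2
  else p - 2

/-- `π*_n` of Section 2.2 as a (0-indexed) map `Fin n → Fin n`. -/
def pi2starFin (n : ℕ) : Fin n → Fin n :=
  fun i => ⟨(pi2starVal n (i.val + 1) - 1) % n, Nat.mod_lt _ i.pos⟩

/-- Value at (1-indexed) position `p` of the one-line notation of
`ρ*_n = (1, 2, 3, 5, …, n−3, n−1, n, n−2, …, 6, 4)`. -/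
def rhostarVal (n p : ℕ) : ℕ :=
  if p = 1 then 1
  else if p = 2 then 2
  else if p ≤ n / 2 + 1 then 2 * p - 3
  else if p = n / 2 + 2 then n
  else 2 * n - 2 * p + 4

/-- `ρ*_n` as a (0-indexed) map `Fin n → Fin n`. -/
def rhostarFin (n : ℕ) : Fin n → Fin n :=
  fun i => ⟨(rhostarVal n (i.val + 1) - 1) % n, Nat.mod_lt _ i.pos⟩

/-- Value at (1-indexed) position `p` of the one-line notation of
`μ*_n = (2, 3, 5, …, n−3, n, n−1, n−2, n−4, …, 6, 4, 1)`. -/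
def mustarVal (n p : ℕ) : ℕ :=
  if p = 1 then 2
  else if p ≤ n / 2 - 1 then 2 * p - 1
  else if p = n / 2 then n
  else if p = n / 2 + 1 then n - 1
  else if p ≤ n - 1 then 2 * n - 2 * p + 2
  else 1

/-- `μ*_n` as a (0-indexed) map `Fin n → Fin n`. -/
def mustarFin (n : ℕ) : Fin n → Fin n :=
  fun i => ⟨(mustarVal n (i.val + 1) - 1) % n, Nat.mod_lt _ i.pos⟩

/-- A map `ρ : Fin n → Fin n` is convex if for every `i` the set of positions `p`
with `i ≤ ρ p` is a set of consecutive elements. -/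
def IsConvexFun {n : ℕ} (ρ : Fin n → Fin n) : Prop :=
  ∀ i p q r : Fin n, p ≤ q → q ≤ r → i ≤ ρ p → i ≤ ρ r → i ≤ ρ q

/-- A graph is biconvex if it has a bipartition `(X, Xᶜ)` and a linear order
(induced by an injection into `ℕ`) on the vertices such that every neighborhood
of a vertex of `X` is an interval of `Xᶜ` and vice versa. -/
def IsBiconvex {V : Type*} (G : SimpleGraph V) : Prop :=
  ∃ (X : Set V) (f : V → ℕ), Function.Injective f ∧
    (∀ u v, G.Adj u v → (u ∈ X ↔ v ∉ X)) ∧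
    (∀ x ∈ X, ∀ u v w, u ∉ X → v ∉ X → w ∉ X → f u ≤ f v → f v ≤ f w →
      G.Adj x u → G.Adj x w → G.Adj x v) ∧
    (∀ y ∉ X, ∀ u v w, u ∈ X → v ∈ X → w ∈ X → f u ≤ f v → f v ≤ f w →
      G.Adj y u → G.Adj y w → G.Adj y v)

/-- `G` is a permutation graph: isomorphic to `permGraph π` for some permutation `π`. -/
def IsPermutationGraph {V : Type*} (G : SimpleGraph V) : Prop :=
  ∃ (n : ℕ) (π : Fin n → Fin n), Function.Bijective π ∧ Nonempty (G ≃g permGraph π)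

/-- `G` is a `k`-letter graph: there is a partition of the vertices into `p ≤ k`
classes, each a clique or an independent set, and a linear order (an injection
into `ℕ`) such that the edges between any two distinct classes form one of the
four prescribed patterns. -/
def IsKLetterGraph {V : Type*} (k : ℕ) (G : SimpleGraph V) : Prop :=
  ∃ (p : ℕ) (_ : p ≤ k) (P : V → Fin p) (L : V → ℕ), Function.Injective L ∧
    (∀ i : Fin p,
      (∀ u v, P u = i → P v = i → u ≠ v → G.Adj u v) ∨
      (∀ u v, P u = i → P v = i → ¬ G.Adj u v)) ∧
    (∀ i j : Fin p, i ≠ j →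
      (∀ u v, P u = i → P v = j → (G.Adj u v ↔ L u < L v)) ∨
      (∀ u v, P u = i → P v = j → (G.Adj u v ↔ L v < L u)) ∨
      (∀ u v, P u = i → P v = j → G.Adj u v) ∨
      (∀ u v, P u = i → P v = j → ¬ G.Adj u v))

private def sig0 : Fin 7 → Fin 9 := ![0,1,2,3,4,5,6]
private def sigp : Fin 7 → Fin 9 := ![1,2,3,4,5,6,7]
private def sig2 : Fin 7 → Fin 9 := ![2,3,4,5,6,7,8]
private def sig1 : Fin 7 → Fin 9 := ![0,1,6,5,4,3,8]
private def sig3 : Fin 7 → Fin 9 := ![8,7,2,3,4,5,0]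

private lemma induced7 {V : Type} (G : SimpleGraph V) (g : Fin 7 → V)
    (hg : Function.Injective g)
    (hA : ∀ i j : Fin 7, i.val + 1 = j.val → G.Adj (g i) (g j))
    (hN : ∀ i j : Fin 7, i.val + 2 ≤ j.val → ¬ G.Adj (g i) (g j)) :
    IsInducedSubgraph (pathN 7) G := by
  refine ⟨g, hg, fun u v => ?_⟩
  rw [pathN, SimpleGraph.fromRel_adj]
  constructor
  · intro h
    have hne : u ≠ v := fun he => G.irrefl (he ▸ h)
    have hvne : u.val ≠ v.val := fun he => hne (Fin.ext he)
    refine ⟨hne, ?_⟩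
    rcases Nat.lt_or_ge u.val v.val with hlt | hge
    · left; by_contra hne2; exact hN u v (by omega) h
    · right; by_contra hne2; exact hN v u (by omega) h.symm
  · rintro ⟨hne, h | h⟩
    · exact hA u v h
    · exact (hA v u h).symm

private lemma noC4 {V : Type} (G : SimpleGraph V) (hc4 : HFree c4 G)
    (w x y z : V) (hwy : w ≠ y) (hxz : x ≠ z)
    (h1 : G.Adj w x) (h2 : G.Adj x y) (h3 : G.Adj y z) (h4 : G.Adj z w)
    (n1 : ¬ G.Adj w y) (n2 : ¬ G.Adj x z) : False := by
  apply hc4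
  have hwx := h1.ne
  have hxy := h2.ne
  have hyz := h3.ne
  have hzw := h4.ne
  refine ⟨(fun i => if i.val = 0 then w else if i.val = 1 then x
      else if i.val = 2 then y else z), ?_, ?_⟩
  · intro u v huv
    fin_cases u <;> fin_cases v <;> simp_all
  · intro u v
    fin_cases u <;> fin_cases v <;>
      simp only [c4, SimpleGraph.fromRel_adj] <;>
      norm_num <;>
      first
      | exact G.irrefl _
      | exact fun h => n1 h
      | exact fun h => n1 h.symm
      | exact fun h => n2 h
      | exact fun h => n2 h.symm
      | exact h1 | exact h1.symm | exact h2 | exact h2.symm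
      | exact h3 | exact h3.symm | exact h4 | exact h4.symm
      | exact iff_of_true h1 (by decide) | exact iff_of_true h1.symm (by decide)
      | exact iff_of_true h2 (by decide) | exact iff_of_true h2.symm (by decide)
      | exact iff_of_true h3 (by decide) | exact iff_of_true h3.symm (by decide)
      | exact iff_of_true h4 (by decide) | exact iff_of_true h4.symm (by decide)

set_option maxHeartbeats 2000000 in
/-- No `P_7`-free and `C_4`-free bipartite graph contains `P_9` as
a (not necessarily induced) subgraph. -/
theorem p7_c4_free_no_p9_subgraph (V : Type) [Fintype V] (G : SimpleGraph V)
    (hbip : IsBipartite G) (hp7 : HFree (pathN 7) G) (hc4 : HFree c4 G) :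
    ¬ IsSubgraphOf (pathN 9) G := by
  rintro ⟨f, hinj, hadjf⟩
  obtain ⟨c, hc⟩ := hbip
  have e : ∀ i j : Fin 9, i.val + 1 = j.val → G.Adj (f i) (f j) := by
    intro i j h
    refine hadjf i j ?_
    rw [pathN, SimpleGraph.fromRel_adj]
    exact ⟨fun he => by subst he; omega, Or.inl h⟩
  have e01 := e 0 1 (by decide)
  have e12 := e 1 2 (by decide)
  have e23 := e 2 3 (by decide)
  have e34 := e 3 4 (by decide)
  have e45 := e 4 5 (by decide)
  have e56 := e 5 6 (by decide)
  have e67 := e 6 7 (by decide)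
  have e78 := e 7 8 (by decide)
  have d : ∀ i j : Fin 9, i ≠ j → f i ≠ f j := fun i j hij he => hij (hinj he)
  have flip : ∀ i j : Fin 9, G.Adj (f i) (f j) → c (f j) = !c (f i) := by
    intro i j h
    have := hc _ _ h
    cases h1 : c (f i) <;> cases h2 : c (f j) <;> simp_all
  have g1 : c (f 1) = !c (f 0) := flip 0 1 e01
  have g2 : c (f 2) = c (f 0) := by rw [flip 1 2 e12, g1, Bool.not_not]
  have g3 : c (f 3) = !c (f 0) := by rw [flip 2 3 e23, g2]
  have g4 : c (f 4) = c (f 0) := by rw [flip 3 4 e34, g3, Bool.not_not]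
  have g5 : c (f 5) = !c (f 0) := by rw [flip 4 5 e45, g4]
  have g6 : c (f 6) = c (f 0) := by rw [flip 5 6 e56, g5, Bool.not_not]
  have g7 : c (f 7) = !c (f 0) := by rw [flip 6 7 e67, g6]
  have g8 : c (f 8) = c (f 0) := by rw [flip 7 8 e78, g7, Bool.not_not]
  have np : ∀ i j : Fin 9, c (f i) = c (f j) → ¬ G.Adj (f i) (f j) :=
    fun i j hp h => hc _ _ h hp
  have n02 := np 0 2 g2.symm
  have n04 := np 0 4 g4.symm
  have n06 := np 0 6 g6.symm
  have n08 := np 0 8 g8.symm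
  have n24 := np 2 4 (g2.trans g4.symm)
  have n26 := np 2 6 (g2.trans g6.symm)
  have n28 := np 2 8 (g2.trans g8.symm)
  have n46 := np 4 6 (g4.trans g6.symm)
  have n48 := np 4 8 (g4.trans g8.symm)
  have n68 := np 6 8 (g6.trans g8.symm)
  have n13 := np 1 3 (g1.trans g3.symm)
  have n15 := np 1 5 (g1.trans g5.symm)
  have n17 := np 1 7 (g1.trans g7.symm)
  have n35 := np 3 5 (g3.trans g5.symm)
  have n37 := np 3 7 (g3.trans g7.symm)
  have n57 := np 5 7 (g5.trans g7.symm)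
  have n03 : ¬ G.Adj (f 0) (f 3) := fun h =>
    noC4 G hc4 (f 0) (f 1) (f 2) (f 3) (d 0 2 (by decide)) (d 1 3 (by decide))
      e01 e12 e23 h.symm n02 n13
  have n14 : ¬ G.Adj (f 1) (f 4) := fun h =>
    noC4 G hc4 (f 1) (f 2) (f 3) (f 4) (d 1 3 (by decide)) (d 2 4 (by decide))
      e12 e23 e34 h.symm n13 n24
  have n25 : ¬ G.Adj (f 2) (f 5) := fun h =>
    noC4 G hc4 (f 2) (f 3) (f 4) (f 5) (d 2 4 (by decide)) (d 3 5 (by decide))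
      e23 e34 e45 h.symm n24 n35
  have n36 : ¬ G.Adj (f 3) (f 6) := fun h =>
    noC4 G hc4 (f 3) (f 4) (f 5) (f 6) (d 3 5 (by decide)) (d 4 6 (by decide))
      e34 e45 e56 h.symm n35 n46
  have n47 : ¬ G.Adj (f 4) (f 7) := fun h =>
    noC4 G hc4 (f 4) (f 5) (f 6) (f 7) (d 4 6 (by decide)) (d 5 7 (by decide))
      e45 e56 e67 h.symm n46 n57
  have n58 : ¬ G.Adj (f 5) (f 8) := fun h =>
    noC4 G hc4 (f 5) (f 6) (f 7) (f 8) (d 5 7 (by decide)) (d 6 8 (by decide))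
      e56 e67 e78 h.symm n57 n68
  by_cases hB : G.Adj (f 1) (f 6)
  · have nC : ¬ G.Adj (f 2) (f 7) := fun h =>
      noC4 G hc4 (f 1) (f 2) (f 7) (f 6) (d 1 7 (by decide)) (d 2 6 (by decide))
        e12 h e67.symm hB.symm n17 n26
    by_cases hD : G.Adj (f 3) (f 8)
    · have nA : ¬ G.Adj (f 0) (f 5) := fun h =>
        noC4 G hc4 (f 0) (f 1) (f 6) (f 5) (d 0 6 (by decide)) (d 1 5 (by decide))
          e01 hB e56.symm h.symm n06 n15
      have nF : ¬ G.Adj (f 1) (f 8) := fun h =>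
        noC4 G hc4 (f 1) (f 6) (f 7) (f 8) (d 1 7 (by decide)) (d 6 8 (by decide))
          hB e67 e78 h.symm n17 n68
      apply hp7
      refine induced7 G (f ∘ sig1) (hinj.comp (by decide)) ?_ ?_
      · intro i j h
        fin_cases i <;> fin_cases j <;>
          first
          | exact absurd h (by decide)
          | exact e01
          | exact e01.symm
          | exact hB
          | exact hB.symm
          | exact e56
          | exact e56.symm
          | exact e45
          | exact e45.symm
          | exact e34
          | exact e34.symm
          | exact hD
          | exact hD.symm
      · intro i j h
        fin_cases i <;> fin_cases j <;>
          first
          | exact absurd h (by decide)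
          | exact n06
          | exact fun hh => n06 hh.symm
          | exact nA
          | exact fun hh => nA hh.symm
          | exact n04
          | exact fun hh => n04 hh.symm
          | exact n03
          | exact fun hh => n03 hh.symm
          | exact n08
          | exact fun hh => n08 hh.symm
          | exact n15
          | exact fun hh => n15 hh.symm
          | exact n14
          | exact fun hh => n14 hh.symm
          | exact n13
          | exact fun hh => n13 hh.symm
          | exact nF
          | exact fun hh => nF hh.symm
          | exact n46
          | exact fun hh => n46 hh.symm
          | exact n36
          | exact fun hh => n36 hh.symm
          | exact n68
          | exact fun hh => n68 hh.symm
          | exact n35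
          | exact fun hh => n35 hh.symm
          | exact n58
          | exact fun hh => n58 hh.symm
          | exact n48
          | exact fun hh => n48 hh.symm

    · apply hp7
      refine induced7 G (f ∘ sig2) (hinj.comp (by decide)) ?_ ?_
      · intro i j h
        fin_cases i <;> fin_cases j <;>
          first
          | exact absurd h (by decide)
          | exact e23
          | exact e23.symm
          | exact e34
          | exact e34.symm
          | exact e45
          | exact e45.symm
          | exact e56
          | exact e56.symm
          | exact e67
          | exact e67.symm
          | exact e78
          | exact e78.symm
      · intro i j h
        fin_cases i <;> fin_cases j <;>
          first
          | exact absurd h (by decide)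
          | exact n24
          | exact fun hh => n24 hh.symm
          | exact n26
          | exact fun hh => n26 hh.symm
          | exact n28
          | exact fun hh => n28 hh.symm
          | exact n46
          | exact fun hh => n46 hh.symm
          | exact n48
          | exact fun hh => n48 hh.symm
          | exact n68
          | exact fun hh => n68 hh.symm
          | exact n35
          | exact fun hh => n35 hh.symm
          | exact n37
          | exact fun hh => n37 hh.symm
          | exact n57
          | exact fun hh => n57 hh.symm
          | exact n25
          | exact fun hh => n25 hh.symm
          | exact n36
          | exact fun hh => n36 hh.symm
          | exact n47
          | exact fun hh => n47 hh.symm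
          | exact n58
          | exact fun hh => n58 hh.symm
          | exact nC
          | exact fun hh => nC hh.symm
          | exact hD
          | exact fun hh => hD hh.symm

  · by_cases hA0 : G.Adj (f 0) (f 5)
    · by_cases hC : G.Adj (f 2) (f 7)
      · have nD : ¬ G.Adj (f 3) (f 8) := fun h =>
          noC4 G hc4 (f 2) (f 3) (f 8) (f 7) (d 2 8 (by decide)) (d 3 7 (by decide))
            e23 h e78.symm hC.symm n28 n37
        have nE : ¬ G.Adj (f 0) (f 7) := fun h =>
          noC4 G hc4 (f 0) (f 5) (f 6) (f 7) (d 0 6 (by decide)) (d 5 7 (by decide))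
            hA0 e56 e67 h.symm n06 n57
        apply hp7
        refine induced7 G (f ∘ sig3) (hinj.comp (by decide)) ?_ ?_
        · intro i j h
          fin_cases i <;> fin_cases j <;>
            first
            | exact absurd h (by decide)
            | exact e78
            | exact e78.symm
            | exact hC
            | exact hC.symm
            | exact e23
            | exact e23.symm
            | exact e34
            | exact e34.symm
            | exact e45
            | exact e45.symm
            | exact hA0
            | exact hA0.symm
        · intro i j h
          fin_cases i <;> fin_cases j <;>
            first
            | exact absurd h (by decide)
            | exact n28
            | exact fun hh => n28 hh.symm
            | exact nD
            | exact fun hh => nD hh.symm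
            | exact n48
            | exact fun hh => n48 hh.symm
            | exact n58
            | exact fun hh => n58 hh.symm
            | exact n08
            | exact fun hh => n08 hh.symm
            | exact n37
            | exact fun hh => n37 hh.symm
            | exact n47
            | exact fun hh => n47 hh.symm
            | exact n57
            | exact fun hh => n57 hh.symm
            | exact nE
            | exact fun hh => nE hh.symm
            | exact n24
            | exact fun hh => n24 hh.symm
            | exact n25
            | exact fun hh => n25 hh.symm
            | exact n02
            | exact fun hh => n02 hh.symm
            | exact n35
            | exact fun hh => n35 hh.symm
            | exact n03
            | exact fun hh => n03 hh.symm
            | exact n04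
            | exact fun hh => n04 hh.symm

      · apply hp7
        refine induced7 G (f ∘ sigp) (hinj.comp (by decide)) ?_ ?_
        · intro i j h
          fin_cases i <;> fin_cases j <;>
            first
            | exact absurd h (by decide)
            | exact e12
            | exact e12.symm
            | exact e23
            | exact e23.symm
            | exact e34
            | exact e34.symm
            | exact e45
            | exact e45.symm
            | exact e56
            | exact e56.symm
            | exact e67
            | exact e67.symm
        · intro i j h
          fin_cases i <;> fin_cases j <;>
            first
            | exact absurd h (by decide)
            | exact n13
            | exact fun hh => n13 hh.symm
            | exact n15
            | exact fun hh => n15 hh.symm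
            | exact n17
            | exact fun hh => n17 hh.symm
            | exact n35
            | exact fun hh => n35 hh.symm
            | exact n37
            | exact fun hh => n37 hh.symm
            | exact n57
            | exact fun hh => n57 hh.symm
            | exact n24
            | exact fun hh => n24 hh.symm
            | exact n26
            | exact fun hh => n26 hh.symm
            | exact n46
            | exact fun hh => n46 hh.symm
            | exact n14
            | exact fun hh => n14 hh.symm
            | exact n25
            | exact fun hh => n25 hh.symm
            | exact n36
            | exact fun hh => n36 hh.symm
            | exact n47
            | exact fun hh => n47 hh.symm
            | exact hB
            | exact fun hh => hB hh.symm
            | exact hC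
            | exact fun hh => hC hh.symm

    · apply hp7
      refine induced7 G (f ∘ sig0) (hinj.comp (by decide)) ?_ ?_
      · intro i j h
        fin_cases i <;> fin_cases j <;>
          first
          | exact absurd h (by decide)
          | exact e01
          | exact e01.symm
          | exact e12
          | exact e12.symm
          | exact e23
          | exact e23.symm
          | exact e34
          | exact e34.symm
          | exact e45
          | exact e45.symm
          | exact e56
          | exact e56.symm
      · intro i j h
        fin_cases i <;> fin_cases j <;>
          first
          | exact absurd h (by decide)
          | exact n02
          | exact fun hh => n02 hh.symm
          | exact n04
          | exact fun hh => n04 hh.symm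
          | exact n06
          | exact fun hh => n06 hh.symm
          | exact n24
          | exact fun hh => n24 hh.symm
          | exact n26
          | exact fun hh => n26 hh.symm
          | exact n46
          | exact fun hh => n46 hh.symm
          | exact n13
          | exact fun hh => n13 hh.symm
          | exact n15
          | exact fun hh => n15 hh.symm
          | exact n35
          | exact fun hh => n35 hh.symm
          | exact n03
          | exact fun hh => n03 hh.symm
          | exact n14
          | exact fun hh => n14 hh.symm
          | exact n25
          | exact fun hh => n25 hh.symm
          | exact n36
          | exact fun hh => n36 hh.symm
          | exact hA0
          | exact fun hh => hA0 hh.symm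
          | exact hB
          | exact fun hh => hB hh.symm
end

section
/- For every k ≥ 1, every connected P_k-free bipartite permutation graph on n vertices is isomorphic to an induced subgraph of the graph H_{k,n}. -/
/-! ### Auxiliary development -/

namespace BPG

open Finset SimpleGraph
open scoped Classical

noncomputable section

variable {n : ℕ}

lemma adjB_iff (π : Fin n → Fin n) (u v : Fin n) :
    (permGraph π).Adj u v ↔
      ((u.1 < v.1 ∧ (π v).1 < (π u).1) ∨ (v.1 < u.1 ∧ (π u).1 < (π v).1)) := by
  unfold permGraph
  rw [SimpleGraph.fromRel_adj]
  simp only [Fin.lt_def]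
  constructor
  · rintro ⟨_, h | h⟩
    · exact Or.inl h
    · exact Or.inr h
  · rintro (h | h)
    · exact ⟨fun e => by subst e; omega, Or.inl h⟩
    · exact ⟨fun e => by subst e; omega, Or.inr h⟩

lemma nonadjB (π : Fin n → Fin n) (hπ : Function.Injective π) {u v : Fin n}
    (h : ¬ (permGraph π).Adj u v) (hne : u ≠ v) :
    (u.1 < v.1 ∧ (π u).1 < (π v).1) ∨ (v.1 < u.1 ∧ (π v).1 < (π u).1) := by
  rw [adjB_iff] at h
  have h1 : u.1 ≠ v.1 := fun e => hne (Fin.ext e)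
  have h2 : (π u).1 ≠ (π v).1 := fun e => hne (hπ (Fin.ext e))
  omega

end

end BPG
set_option linter.unusedSectionVars false

namespace BPG

open Finset SimpleGraph
open scoped Classical

noncomputable section

variable {n : ℕ}

/-- The root vertex: position `0`. -/
def rt (hn : 0 < n) : Fin n := ⟨0, hn⟩

/-- BFS level: distance from the root. -/
def lv (π : Fin n → Fin n) (hn : 0 < n) (v : Fin n) : ℕ :=
  (permGraph π).dist (rt hn) v

section Levels

variable (π : Fin n → Fin n) (hn : 0 < n)

lemma lv_rt : lv π hn (rt hn) = 0 := SimpleGraph.dist_self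

variable (hconn : (permGraph π).Connected)
include hconn

lemma lv_eq_zero {v : Fin n} (h : lv π hn v = 0) : v = rt hn := by
  rcases SimpleGraph.dist_eq_zero_iff_eq_or_not_reachable.mp h with h' | h'
  · exact h'.symm
  · exact absurd (hconn (rt hn) v) h'

lemma adj_lv_le {u v : Fin n} (h : (permGraph π).Adj u v) :
    lv π hn v ≤ lv π hn u + 1 := by
  have h1 := hconn.dist_triangle (u := rt hn) (v := u) (w := v)
  have h2 : (permGraph π).dist u v = 1 := SimpleGraph.dist_eq_one_iff_adj.mpr h
  unfold lv; omega

lemma lv_getVert_le {x : Fin n} (w : (permGraph π).Walk (rt hn) x) :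
    ∀ i, lv π hn (w.getVert i) ≤ i := by
  intro i
  induction i with
  | zero => rw [SimpleGraph.Walk.getVert_zero]; exact le_of_eq (lv_rt π hn)
  | succ i ih =>
    by_cases hi : i < w.length
    · have hadj := w.adj_getVert_succ hi
      have := adj_lv_le π hn hconn hadj
      omega
    · push_neg at hi
      have e1 : w.getVert (i+1) = x := SimpleGraph.Walk.getVert_of_length_le w (by omega)
      have e2 : w.getVert i = x := SimpleGraph.Walk.getVert_of_length_le w hi
      rw [e1, ← e2]; omega

lemma lv_getVert_ge {z : Fin n} (w : (permGraph π).Walk (rt hn) z) :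
    ∀ d i, i ≤ w.length → w.length - i = d →
      lv π hn z ≤ lv π hn (w.getVert i) + (w.length - i) := by
  intro d
  induction d with
  | zero =>
    intro i hi hd
    have : i = w.length := by omega
    subst this
    rw [SimpleGraph.Walk.getVert_length]; omega
  | succ d ih =>
    intro i hi hd
    have hi' : i < w.length := by omega
    have hadj := w.adj_getVert_succ hi'
    have h1 := adj_lv_le π hn hconn hadj
    have h2 := ih (i+1) (by omega) (by omega)
    omega

lemma lv_getVert_geodesic {z : Fin n} (w : (permGraph π).Walk (rt hn) z)
    (hlen : w.length = lv π hn z) {i : ℕ} (hi : i ≤ w.length) :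
    lv π hn (w.getVert i) = i := by
  have h1 := lv_getVert_le π hn hconn w i
  have h2 := lv_getVert_ge π hn hconn w (w.length - i) i hi rfl
  omega

lemma exists_down {v : Fin n} {t : ℕ} (h : lv π hn v = t + 1) :
    ∃ u, (permGraph π).Adj u v ∧ lv π hn u = t := by
  have hne : (permGraph π).dist (rt hn) v ≠ 0 := by unfold lv at h; omega
  obtain ⟨w, hw⟩ := SimpleGraph.exists_walk_of_dist_ne_zero hne
  have hlen : w.length = lv π hn v := hw
  refine ⟨w.getVert t, ?_, ?_⟩
  · have hadj := w.adj_getVert_succ (i := t) (by omega)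
    have : w.getVert (t+1) = v := by
      have : t + 1 = w.length := by omega
      rw [this, SimpleGraph.Walk.getVert_length]
    rwa [this] at hadj
  · exact lv_getVert_geodesic π hn hconn w hlen (by omega)

lemma lv_lt_n (v : Fin n) : lv π hn v < n := by
  obtain ⟨p, hp, hlen⟩ := hconn.exists_path_of_dist (rt hn) v
  have := hp.length_lt
  rw [Fintype.card_fin] at this
  unfold lv; omega

variable (c : Fin n → Bool) (hc : ∀ u v, (permGraph π).Adj u v → c u ≠ c v)
include hc

lemma walk_parity {x y : Fin n} (w : (permGraph π).Walk x y) :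
    (c x = c y) ↔ Even w.length := by
  induction w with
  | nil => simp
  | @cons a b y h p ih =>
    have hab := hc _ _ h
    rw [SimpleGraph.Walk.length_cons]
    rw [Nat.even_add_one, ← ih]
    cases hx : c a <;> cases hy : c b <;> cases hz : c y <;> simp_all

lemma lv_parity (v : Fin n) : (c (rt hn) = c v) ↔ Even (lv π hn v) := by
  obtain ⟨w, hw⟩ := (hconn (rt hn) v).exists_walk_length_eq_dist
  have := walk_parity π hconn c hc w
  rw [hw] at this
  exact this

lemma class_of_parity {u v : Fin n} (h : Even (lv π hn u) ↔ Even (lv π hn v)) :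
    c u = c v := by
  have h1 := lv_parity π hn hconn c hc u
  have h2 := lv_parity π hn hconn c hc v
  have key : ∀ a b d : Bool, ((a = b) ↔ (a = d)) → b = d := by decide
  exact key _ _ _ (h1.trans (h.trans h2.symm))

lemma adj_parity {u v : Fin n} (h : (permGraph π).Adj u v) :
    ¬ (Even (lv π hn u) ↔ Even (lv π hn v)) := by
  intro hiff
  exact hc u v h (class_of_parity π hn hconn c hc hiff)

lemma adj_lv_succ {u v : Fin n} (h : (permGraph π).Adj u v) :
    lv π hn v = lv π hn u + 1 ∨ lv π hn u = lv π hn v + 1 := by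
  have h1 := adj_lv_le π hn hconn h
  have h2 := adj_lv_le π hn hconn h.symm
  have h3 := adj_parity π hn hconn c hc h
  have : lv π hn u ≠ lv π hn v := by intro e; rw [e] at h3; exact h3 Iff.rfl
  omega

lemma class_mono (hπ : Function.Injective π) {u v : Fin n} (h : c u = c v)
    (hlt : u.1 < v.1) : (π u).1 < (π v).1 := by
  have hne : u ≠ v := fun e => by subst e; omega
  have hnadj : ¬ (permGraph π).Adj u v := fun ha => hc u v ha h
  rcases nonadjB π hπ hnadj hne with ⟨_, h2⟩ | ⟨h1, _⟩
  · exact h2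
  · omega

end Levels

end

end BPG
namespace BPG

open Finset SimpleGraph
open scoped Classical

noncomputable section

variable {n : ℕ}

lemma even_two_apart {a b : ℕ} (h : a + 2 = b) : (Even a ↔ Even b) :=
  ⟨fun ⟨r, hr⟩ => ⟨r + 1, by omega⟩, fun ⟨r, hr⟩ => ⟨r - 1, by omega⟩⟩

/-- Monotonicity of levels along each class. -/
lemma mono (π : Fin n → Fin n) (hn : 0 < n) (hπi : Function.Injective π)
    (hconn : (permGraph π).Connected) (c : Fin n → Bool)
    (hc : ∀ u v, (permGraph π).Adj u v → c u ≠ c v) :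
    ∀ t (a b : Fin n), a.1 < b.1 → c a = c b → lv π hn b = t → lv π hn a ≤ t := by
  intro t
  induction t using Nat.strong_induction_on with
  | _ t IH =>
  intro a b hab hcab hlvb
  by_contra hgt
  push_neg at hgt
  have hpar : Even (lv π hn a) ↔ Even (lv π hn b) := by
    have h1 := lv_parity π hn hconn c hc a
    have h2 := lv_parity π hn hconn c hc b
    rw [hcab] at h1; exact h1.symm.trans h2
  rw [hlvb, Nat.even_iff, Nat.even_iff] at hpar
  have hge2 : t + 2 ≤ lv π hn a := by omega
  rcases t with _ | t'
  · have hb := lv_eq_zero π hn hconn hlvb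
    rw [hb] at hab
    simp [rt] at hab
  · obtain ⟨w, hwb, hlw⟩ := exists_down π hn hconn hlvb
    have hnaw : ¬ (permGraph π).Adj a w := by
      intro h
      have := adj_lv_le π hn hconn (u := w) (v := a) h.symm
      omega
    have hπab : (π a).1 < (π b).1 := class_mono π hconn c hc hπi hcab hab
    have hnew : a ≠ w := by
      intro e; rw [← e] at hlw; omega
    have hdaw := nonadjB π hπi hnaw hnew
    have hdwb := (adjB_iff π w b).mp hwb
    rcases hdaw with ⟨haw, hπaw⟩ | ⟨hwa, hπwa⟩
    · -- a < w
      obtain ⟨z, hza, hlz⟩ := exists_down π hn hconn (v := a) (t := lv π hn a - 1)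
        (by omega)
      have hnzw : ¬ (permGraph π).Adj z w := by
        intro h
        have := adj_lv_le π hn hconn (u := w) (v := z) h.symm
        omega
      have hnzwne : z ≠ w := by intro e; rw [e] at hlz; omega
      have hdzw := nonadjB π hπi hnzw hnzwne
      have hdza := (adjB_iff π z a).mp hza
      rcases hdzw with ⟨hzw, hπzw⟩ | ⟨hwz, hπwz⟩
      · -- z < w : use IH
        have hcz : c z = c w := by
          have h1 := hc z a hza
          have h2 := hc w b hwb
          have key : ∀ p q r s : Bool, p ≠ q → r ≠ s → q = s → p = r := by decide
          exact key _ _ _ _ h1 h2 hcab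
        have := IH t' (by omega) z w hzw hcz hlw
        omega
      · omega
    · omega

/-- Blocks: a vertex two levels up is to the right (in position and value). -/
lemma block (π : Fin n → Fin n) (hn : 0 < n) (hπi : Function.Injective π)
    (hconn : (permGraph π).Connected) (c : Fin n → Bool)
    (hc : ∀ u v, (permGraph π).Adj u v → c u ≠ c v)
    {w q0 : Fin n} {t : ℕ} (hlw : lv π hn w = t) (hq0 : lv π hn q0 = t + 2) :
    w.1 < q0.1 ∧ (π w).1 < (π q0).1 := by
  have hcwq : c w = c q0 := by
    refine class_of_parity π hn hconn c hc ?_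
    rw [hlw, hq0]
    exact even_two_apart rfl
  have hne : q0 ≠ w := by intro e; rw [e, hlw] at hq0; omega
  have hpos : w.1 < q0.1 := by
    rcases lt_trichotomy q0.1 w.1 with h | h | h
    · exfalso
      have := mono π hn hπi hconn c hc t q0 w h hcwq.symm hlw
      omega
    · exact absurd (Fin.ext h) hne
    · exact h
  exact ⟨hpos, class_mono π hconn c hc hπi hcwq hpos⟩

/-- Same-level vertices are aligned (same class). -/
lemma same_level_aligned (π : Fin n → Fin n) (hn : 0 < n) (hπi : Function.Injective π)
    (hconn : (permGraph π).Connected) (c : Fin n → Bool)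
    (hc : ∀ u v, (permGraph π).Adj u v → c u ≠ c v)
    {q q' : Fin n} (hne : q ≠ q') (h : lv π hn q = lv π hn q') :
    (q.1 < q'.1 ∧ (π q).1 < (π q').1) ∨ (q'.1 < q.1 ∧ (π q').1 < (π q).1) := by
  have hcqq' : c q = c q' := by
    refine class_of_parity π hn hconn c hc ?_
    rw [h]
  rcases lt_trichotomy q.1 q'.1 with hlt | heq | hgt
  · exact Or.inl ⟨hlt, class_mono π hconn c hc hπi hcqq' hlt⟩
  · exact absurd (Fin.ext heq) hne
  · exact Or.inr ⟨hgt, class_mono π hconn c hc hπi hcqq'.symm hgt⟩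

/-- C1: down-neighborhoods of same-level vertices are nested. -/
lemma cone (π : Fin n → Fin n) (hn : 0 < n) (hπi : Function.Injective π)
    (hconn : (permGraph π).Connected) (c : Fin n → Bool)
    (hc : ∀ u v, (permGraph π).Adj u v → c u ≠ c v) :
    ∀ t (u u' v v' : Fin n), lv π hn u = t → lv π hn u' = t →
      lv π hn v = t + 1 → lv π hn v' = t + 1 →
      (permGraph π).Adj u v → (permGraph π).Adj u' v' →
      ¬ (permGraph π).Adj u v' → ¬ (permGraph π).Adj u' v → False := by
  intro t
  induction t using Nat.strong_induction_on with
  | _ t IH =>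
  have core : ∀ p p' q q' : Fin n, lv π hn p = t → lv π hn p' = t →
      lv π hn q = t + 1 → lv π hn q' = t + 1 →
      (permGraph π).Adj p q → (permGraph π).Adj p' q' →
      ¬ (permGraph π).Adj p q' → ¬ (permGraph π).Adj p' q → p.1 < p'.1 → False := by
    intro p p' q q' hp hp' hq hq' hpq hp'q' hnpq' hnp'q hlt
    rcases t with _ | t'
    · have e1 := lv_eq_zero π hn hconn hp
      have e2 := lv_eq_zero π hn hconn hp'
      rw [e1, e2] at hlt; omega
    · obtain ⟨w0, hw0p, hlw0⟩ := exists_down π hn hconn hp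
      obtain ⟨w1, hw1p', hlw1⟩ := exists_down π hn hconn hp'
      have hw : ∃ w, (permGraph π).Adj w p ∧ (permGraph π).Adj w p' ∧ lv π hn w = t' := by
        by_cases h0 : (permGraph π).Adj w0 p'
        · exact ⟨w0, hw0p, h0, hlw0⟩
        by_cases h1 : (permGraph π).Adj w1 p
        · exact ⟨w1, h1, hw1p', hlw1⟩
        · exact (IH t' (by omega) w0 w1 p p' hlw0 hlw1 hp hp' hw0p hw1p' h0 h1).elim
      obtain ⟨w, hwp, hwp', hlw⟩ := hw
      obtain ⟨hwq, hπwq⟩ := block π hn hπi hconn c hc hlw (by omega : lv π hn q = t' + 2)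
      obtain ⟨hwq', hπwq'⟩ := block π hn hπi hconn c hc hlw (by omega : lv π hn q' = t' + 2)
      have hπpp' : (π p).1 < (π p').1 := by
        have hcpp' : c p = c p' := by
          refine class_of_parity π hn hconn c hc ?_
          rw [hp, hp']
        exact class_mono π hconn c hc hπi hcpp' hlt
      have hqq'ne : q ≠ q' := by
        intro e; rw [← e] at hp'q'; exact hnp'q hp'q'
      have hdqq' := same_level_aligned π hn hπi hconn c hc hqq'ne (by rw [hq, hq'])
      have d1 := (adjB_iff π w p).mp hwp
      have d2 := (adjB_iff π w p').mp hwp'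
      have d3 := (adjB_iff π p q).mp hpq
      have d4 := (adjB_iff π p' q').mp hp'q'
      have d5 := nonadjB π hπi hnpq' (by intro e; rw [e] at hp; omega)
      have d6 := nonadjB π hπi hnp'q (by intro e; rw [e] at hp'; omega)
      omega
  intro u u' v v' hu hu' hv hv' ha1 ha2 hn1 hn2
  rcases lt_trichotomy u.1 u'.1 with h | h | h
  · exact core u u' v v' hu hu' hv hv' ha1 ha2 hn1 hn2 h
  · have e : u = u' := Fin.ext h
    rw [← e] at ha2
    exact hn1 ha2
  · exact core u' u v' v hu' hu hv' hv ha2 ha1 hn2 hn1 h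

/-- C2: local configuration contradiction. -/
lemma ctwo (π : Fin n → Fin n) (hn : 0 < n) (hπi : Function.Injective π)
    (hconn : (permGraph π).Connected) (c : Fin n → Bool)
    (hc : ∀ u v, (permGraph π).Adj u v → c u ≠ c v) :
    ∀ t (u u' v v' w2 : Fin n), lv π hn u = t → lv π hn u' = t →
      lv π hn v = t + 1 → lv π hn v' = t + 1 → lv π hn w2 = t + 2 →
      (permGraph π).Adj u v → (permGraph π).Adj u v' → (permGraph π).Adj u' v' →
      ¬ (permGraph π).Adj u' v → (permGraph π).Adj w2 v' → ¬ (permGraph π).Adj w2 v →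
      False := by
  intro t u u' v v' w2 hu hu' hv hv' hw2 auv auv' au'v' nau'v aw2v' naw2v
  have hne_uu' : u ≠ u' := by
    intro e; rw [e] at auv; exact nau'v auv
  rcases t with _ | t'
  · have e1 := lv_eq_zero π hn hconn hu
    have e2 := lv_eq_zero π hn hconn hu'
    exact hne_uu' (e1.trans e2.symm)
  · obtain ⟨w0, hw0u, hlw0⟩ := exists_down π hn hconn hu
    obtain ⟨w1, hw1u', hlw1⟩ := exists_down π hn hconn hu'
    have hw : ∃ w, (permGraph π).Adj w u ∧ (permGraph π).Adj w u' ∧ lv π hn w = t' := by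
      by_cases h0 : (permGraph π).Adj w0 u'
      · exact ⟨w0, hw0u, h0, hlw0⟩
      by_cases h1 : (permGraph π).Adj w1 u
      · exact ⟨w1, h1, hw1u', hlw1⟩
      · exact (cone π hn hπi hconn c hc t' w0 w1 u u' hlw0 hlw1 hu hu' hw0u hw1u' h0 h1).elim
    obtain ⟨w, hwu, hwu', hlw⟩ := hw
    -- blocks
    obtain ⟨b1, b1'⟩ := block π hn hπi hconn c hc hu (by omega : lv π hn w2 = (t' + 1) + 2)
    obtain ⟨b2, b2'⟩ := block π hn hπi hconn c hc hu' (by omega : lv π hn w2 = (t' + 1) + 2)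
    obtain ⟨b3, b3'⟩ := block π hn hπi hconn c hc hlw (by omega : lv π hn v = t' + 2)
    obtain ⟨b4, b4'⟩ := block π hn hπi hconn c hc hlw (by omega : lv π hn v' = t' + 2)
    -- same-level alignments
    have duu' := same_level_aligned π hn hπi hconn c hc hne_uu' (by rw [hu, hu'])
    have hvv'ne : v ≠ v' := by
      intro e; rw [← e] at au'v'; exact nau'v au'v'
    have dvv' := same_level_aligned π hn hπi hconn c hc hvv'ne (by rw [hv, hv'])
    -- w vs w2 : non-adjacent, different levels
    have hnww2 : ¬ (permGraph π).Adj w w2 := by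
      intro h
      rcases adj_lv_succ π hn hconn c hc h with h' | h' <;> omega
    have dww2 := nonadjB π hπi hnww2 (by intro e; rw [e] at hlw; omega)
    -- adjacency facts
    have e1 := (adjB_iff π u v).mp auv
    have e2 := (adjB_iff π u v').mp auv'
    have e3 := (adjB_iff π u' v').mp au'v'
    have e4 := (adjB_iff π w2 v').mp aw2v'
    have e5 := (adjB_iff π w u).mp hwu
    have e6 := (adjB_iff π w u').mp hwu'
    have f1 := nonadjB π hπi nau'v (by intro e; rw [e] at hu'; omega)
    have f2 := nonadjB π hπi naw2v (by intro e; rw [e] at hw2; omega)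
    omega

end

end BPG
namespace BPG

open Finset SimpleGraph
open scoped Classical

noncomputable section

variable {n : ℕ}

/-- Down-neighborhood (one level closer to the root). -/
def SvS (π : Fin n → Fin n) (hn : 0 < n) (v : Fin n) : Finset (Fin n) :=
  Finset.univ.filter (fun u => (permGraph π).Adj u v ∧ lv π hn u + 1 = lv π hn v)

/-- Up-neighborhood (one level farther from the root). -/
def UvS (π : Fin n → Fin n) (hn : 0 < n) (v : Fin n) : Finset (Fin n) :=
  Finset.univ.filter (fun w => (permGraph π).Adj w v ∧ lv π hn w = lv π hn v + 1)

lemma mem_SvS {π : Fin n → Fin n} {hn : 0 < n} {u v : Fin n} :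
    u ∈ SvS π hn v ↔ ((permGraph π).Adj u v ∧ lv π hn u + 1 = lv π hn v) := by
  simp [SvS]

lemma mem_UvS {π : Fin n → Fin n} {hn : 0 < n} {w v : Fin n} :
    w ∈ UvS π hn v ↔ ((permGraph π).Adj w v ∧ lv π hn w = lv π hn v + 1) := by
  simp [UvS]

lemma SvS_nonempty (π : Fin n → Fin n) (hn : 0 < n) (hconn : (permGraph π).Connected)
    {v : Fin n} {t : ℕ} (h : lv π hn v = t + 1) : (SvS π hn v).Nonempty := by
  obtain ⟨u, hu, hlu⟩ := exists_down π hn hconn h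
  exact ⟨u, mem_SvS.mpr ⟨hu, by omega⟩⟩

/-- The potential function, level by level. -/
def gZ (π : Fin n → Fin n) (hn : 0 < n) : ℕ → Fin n → ℤ
  | 0 => fun _ => 0
  | (t+1) => fun v =>
      if lv π hn v = t + 1 then
        (if h : (SvS π hn v).Nonempty then (SvS π hn v).inf' h (gZ π hn t) else 0)
          - ((n : ℤ) - (UvS π hn v).card) * ((n : ℤ) + 1) ^ (n - (t+1))
      else gZ π hn t v

/-- The final potential. -/
def posZ (π : Fin n → Fin n) (hn : 0 < n) (v : Fin n) : ℤ := gZ π hn (lv π hn v) v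

lemma posZ_eq (π : Fin n → Fin n) (hn : 0 < n) {v : Fin n} {t : ℕ}
    (h : lv π hn v = t + 1) (hne : (SvS π hn v).Nonempty) :
    posZ π hn v = (SvS π hn v).inf' hne (posZ π hn)
      - ((n : ℤ) - (UvS π hn v).card) * ((n : ℤ) + 1) ^ (n - (t+1)) := by
  unfold posZ
  rw [h]
  simp only [gZ]
  rw [if_pos h, dif_pos hne]
  refine congrArg₂ (· - ·) ?_ rfl
  refine Finset.inf'_congr hne rfl (fun x hx => ?_)
  have hx' := mem_SvS.mp hx
  have hlx : lv π hn x = t := by omega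
  rw [hlx]


lemma SvS_subset (π : Fin n → Fin n) (hn : 0 < n) (hπi : Function.Injective π)
    (hconn : (permGraph π).Connected) (c : Fin n → Bool)
    (hc : ∀ u v, (permGraph π).Adj u v → c u ≠ c v)
    {t : ℕ} {u1 u2 w : Fin n} (h1 : lv π hn u1 = t) (h2 : lv π hn u2 = t)
    (haw : (permGraph π).Adj w u2) (hlw : lv π hn w = t + 1)
    (hnw : ¬ (permGraph π).Adj w u1) :
    SvS π hn u2 ⊆ SvS π hn u1 := by
  intro x hx
  rw [mem_SvS] at hx ⊢
  obtain ⟨hxadj, hxlv⟩ := hx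
  refine ⟨?_, by omega⟩
  by_contra hnx
  rcases t with _ | t'
  · omega
  · have hlx : lv π hn x = t' := by omega
    obtain ⟨u0, hu0, hlu0⟩ := exists_down π hn hconn h1
    by_cases had : (permGraph π).Adj u0 u2
    · exact (ctwo π hn hπi hconn c hc t' u0 x u1 u2 w hlu0 hlx h1 h2 (by omega)
        hu0 had hxadj hnx haw hnw).elim
    · exact (cone π hn hπi hconn c hc t' u0 x u1 u2 hlu0 hlx h1 h2 hu0 hxadj had hnx).elim

lemma UvS_subset (π : Fin n → Fin n) (hn : 0 < n) (hπi : Function.Injective π)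
    (hconn : (permGraph π).Connected) (c : Fin n → Bool)
    (hc : ∀ u v, (permGraph π).Adj u v → c u ≠ c v)
    {t : ℕ} {u1 u2 w : Fin n} (h1 : lv π hn u1 = t) (h2 : lv π hn u2 = t)
    (haw : (permGraph π).Adj w u2) (hlw : lv π hn w = t + 1)
    (hnw : ¬ (permGraph π).Adj w u1) :
    UvS π hn u1 ⊆ UvS π hn u2 := by
  intro y hy
  rw [mem_UvS] at hy ⊢
  obtain ⟨hyadj, hylv⟩ := hy
  refine ⟨?_, by omega⟩
  by_contra hny
  exact cone π hn hπi hconn c hc t u1 u2 y w h1 h2 (by omega) (by omega)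
    hyadj.symm haw.symm (fun h => hnw h.symm) (fun h => hny h.symm)

lemma UvS_card_lt (π : Fin n → Fin n) (hn : 0 < n) (hπi : Function.Injective π)
    (hconn : (permGraph π).Connected) (c : Fin n → Bool)
    (hc : ∀ u v, (permGraph π).Adj u v → c u ≠ c v)
    {t : ℕ} {u1 u2 w : Fin n} (h1 : lv π hn u1 = t) (h2 : lv π hn u2 = t)
    (haw : (permGraph π).Adj w u2) (hlw : lv π hn w = t + 1)
    (hnw : ¬ (permGraph π).Adj w u1) :
    (UvS π hn u1).card < (UvS π hn u2).card := by
  have hsub := UvS_subset π hn hπi hconn c hc h1 h2 haw hlw hnw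
  refine Finset.card_lt_card ((Finset.ssubset_iff_of_subset hsub).mpr ?_)
  exact ⟨w, mem_UvS.mpr ⟨haw, by omega⟩, fun hmem => hnw (mem_UvS.mp hmem).1⟩

lemma gap (π : Fin n → Fin n) (hn : 0 < n) (hπi : Function.Injective π)
    (hconn : (permGraph π).Connected) (c : Fin n → Bool)
    (hc : ∀ u v, (permGraph π).Adj u v → c u ≠ c v)
    {t : ℕ} {u1 u2 w : Fin n} (h1 : lv π hn u1 = t) (h2 : lv π hn u2 = t)
    (haw : (permGraph π).Adj w u2) (hlw : lv π hn w = t + 1)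
    (hnw : ¬ (permGraph π).Adj w u1) :
    posZ π hn u1 + ((n : ℤ) + 1) ^ (n - t) ≤ posZ π hn u2 := by
  have hne : u1 ≠ u2 := by
    intro e; rw [← e] at haw; exact hnw haw
  rcases t with _ | t'
  · exact absurd ((lv_eq_zero π hn hconn h1).trans (lv_eq_zero π hn hconn h2).symm) hne
  · have hS := SvS_subset π hn hπi hconn c hc h1 h2 haw hlw hnw
    have hUlt := UvS_card_lt π hn hπi hconn c hc h1 h2 haw hlw hnw
    have hne1 := SvS_nonempty π hn hconn h1
    have hne2 := SvS_nonempty π hn hconn h2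
    have e1 := posZ_eq π hn h1 hne1
    have e2 := posZ_eq π hn h2 hne2
    have hinf : (SvS π hn u1).inf' hne1 (posZ π hn)
        ≤ (SvS π hn u2).inf' hne2 (posZ π hn) := by
      apply Finset.le_inf'
      intro b hb
      exact Finset.inf'_le _ (hS hb)
    set E : ℤ := ((n : ℤ) + 1) ^ (n - (t'+1)) with hE
    have hEpos : 0 < E := pow_pos (by positivity) _
    have hco : ((n : ℤ) - (UvS π hn u2).card) + 1 ≤ ((n : ℤ) - (UvS π hn u1).card) := by
      have : ((UvS π hn u1).card : ℤ) + 1 ≤ ((UvS π hn u2).card : ℤ) := by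
        exact_mod_cast hUlt
      omega
    have hmul : (((n : ℤ) - (UvS π hn u2).card) + 1) * E
        ≤ ((n : ℤ) - (UvS π hn u1).card) * E :=
      mul_le_mul_of_nonneg_right hco hEpos.le
    rw [e1, e2]
    nlinarith [hinf, hmul, hEpos]

lemma pos_le_of_adj (π : Fin n → Fin n) (hn : 0 < n)
    (hconn : (permGraph π).Connected) {u v : Fin n}
    (h : (permGraph π).Adj u v) (hlv : lv π hn v = lv π hn u + 1) :
    posZ π hn v ≤ posZ π hn u := by
  have hne := SvS_nonempty π hn hconn hlv
  have e := posZ_eq π hn hlv hne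
  have hu_mem : u ∈ SvS π hn v := mem_SvS.mpr ⟨h, by omega⟩
  have hinfle : (SvS π hn v).inf' hne (posZ π hn) ≤ posZ π hn u :=
    Finset.inf'_le _ hu_mem
  have hcard : (UvS π hn v).card ≤ n := by
    calc (UvS π hn v).card ≤ (Finset.univ : Finset (Fin n)).card := Finset.card_le_univ _
    _ = n := by rw [Finset.card_univ, Fintype.card_fin]
  have hmz : (0 : ℤ) ≤ ((n : ℤ) - (UvS π hn v).card) * ((n : ℤ) + 1) ^ (n - (lv π hn u + 1)) := by
    apply mul_nonneg
    · have : ((UvS π hn v).card : ℤ) ≤ (n : ℤ) := by exact_mod_cast hcard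
      omega
    · positivity
  rw [e]; linarith

lemma pos_lt_of_nonadj (π : Fin n → Fin n) (hn : 0 < n) (hπi : Function.Injective π)
    (hconn : (permGraph π).Connected) (c : Fin n → Bool)
    (hc : ∀ u v, (permGraph π).Adj u v → c u ≠ c v) {u v : Fin n}
    (hnadj : ¬ (permGraph π).Adj u v) (hlv : lv π hn v = lv π hn u + 1) :
    posZ π hn u < posZ π hn v := by
  set t := lv π hn u with ht
  have hne := SvS_nonempty π hn hconn hlv
  obtain ⟨u0, hu0mem, hinf_eq⟩ := Finset.exists_mem_eq_inf' hne (posZ π hn)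
  obtain ⟨hu0adj, hu0lv⟩ := mem_SvS.mp hu0mem
  have hlu0 : lv π hn u0 = t := by omega
  have hgap := gap π hn hπi hconn c hc (t := t) rfl hlu0 hu0adj.symm hlv
    (fun h => hnadj h.symm)
  have e := posZ_eq π hn hlv hne
  rw [hinf_eq] at e
  have hlvn : lv π hn v < n := lv_lt_n π hn hconn v
  have hexp : n - t = (n - (t+1)) + 1 := by omega
  have hpow : ((n : ℤ) + 1) ^ (n - t) = ((n : ℤ) + 1) ^ (n - (t+1)) * ((n : ℤ) + 1) := by
    rw [hexp, pow_succ]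
  have hEpos : (0 : ℤ) < ((n : ℤ) + 1) ^ (n - (t+1)) := pow_pos (by positivity) _
  have hcard : (0 : ℤ) ≤ ((UvS π hn v).card : ℤ) := Int.natCast_nonneg _
  have hsmall : ((n : ℤ) - (UvS π hn v).card) * ((n : ℤ) + 1) ^ (n - (t+1))
      < ((n : ℤ) + 1) * ((n : ℤ) + 1) ^ (n - (t+1)) := by
    apply mul_lt_mul_of_pos_right _ hEpos
    omega
  rw [e]
  nlinarith [hgap, hpow, hsmall]

end

end BPG
namespace BPG

open Finset SimpleGraph
open scoped Classical

noncomputable section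

variable {n : ℕ}

lemma lv_add_one_lt (π : Fin n → Fin n) (hn : 0 < n)
    (hconn : (permGraph π).Connected) (c : Fin n → Bool)
    (hc : ∀ u v, (permGraph π).Adj u v → c u ≠ c v) {k : ℕ}
    (hfree : ¬ IsInducedSubgraph (pathN k) (permGraph π)) (v : Fin n) :
    lv π hn v + 1 < k := by
  by_contra hle
  push_neg at hle
  apply hfree
  obtain ⟨w, hw⟩ := (hconn (rt hn) v).exists_walk_length_eq_dist
  have hlen : w.length = lv π hn v := hw
  have hgv : ∀ i : ℕ, i ≤ w.length → lv π hn (w.getVert i) = i :=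
    fun i hi => lv_getVert_geodesic π hn hconn w hlen hi
  refine ⟨fun i => w.getVert i.1, ?_, ?_⟩
  · intro i j hij
    have hij' : w.getVert i.1 = w.getVert j.1 := hij
    have h1 : lv π hn (w.getVert i.1) = i.1 := hgv i.1 (by have := i.2; omega)
    have h2 : lv π hn (w.getVert j.1) = j.1 := hgv j.1 (by have := j.2; omega)
    apply Fin.ext
    rw [← h1, ← h2, hij']
  · intro a b
    have hla : lv π hn (w.getVert a.1) = a.1 := hgv a.1 (by have := a.2; omega)
    have hlb : lv π hn (w.getVert b.1) = b.1 := hgv b.1 (by have := b.2; omega)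
    constructor
    · intro hadj
      have hadj' : (permGraph π).Adj (w.getVert a.1) (w.getVert b.1) := hadj
      unfold pathN
      rw [SimpleGraph.fromRel_adj]
      rcases adj_lv_succ π hn hconn c hc hadj' with h | h
      · refine ⟨fun e => ?_, Or.inl (by omega)⟩
        have := congrArg Fin.val e
        omega
      · refine ⟨fun e => ?_, Or.inr (by omega)⟩
        have := congrArg Fin.val e
        omega
    · intro hpb
      unfold pathN at hpb
      rw [SimpleGraph.fromRel_adj] at hpb
      obtain ⟨hne, hd⟩ := hpb
      rcases hd with h | h
      · have hadj := w.adj_getVert_succ (i := a.1) (by have := b.2; omega)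
        have he : w.getVert (a.1 + 1) = w.getVert b.1 := by rw [h]
        rwa [he] at hadj
      · have hadj := w.adj_getVert_succ (i := b.1) (by have := a.2; omega)
        have he : w.getVert (b.1 + 1) = w.getVert a.1 := by rw [h]
        rw [he] at hadj
        exact hadj.symm

/-- The global tie-breaking order. -/
def KL (π : Fin n → Fin n) (hn : 0 < n) (x y : Fin n) : Prop :=
  posZ π hn x < posZ π hn y ∨
    (posZ π hn x = posZ π hn y ∧
      (lv π hn y < lv π hn x ∨ (lv π hn x = lv π hn y ∧ x.1 < y.1)))

lemma KL_irrefl (π : Fin n → Fin n) (hn : 0 < n) (x : Fin n) : ¬ KL π hn x x := by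
  unfold KL; omega

lemma KL_trans (π : Fin n → Fin n) (hn : 0 < n) {x y z : Fin n}
    (h1 : KL π hn x y) (h2 : KL π hn y z) : KL π hn x z := by
  unfold KL at *; omega

lemma KL_total (π : Fin n → Fin n) (hn : 0 < n) {x y : Fin n} (hne : x ≠ y) :
    KL π hn x y ∨ KL π hn y x := by
  have h : x.1 ≠ y.1 := fun e => hne (Fin.ext e)
  unfold KL; omega

/-- Rank within the global order. -/
def rnk (π : Fin n → Fin n) (hn : 0 < n) (v : Fin n) : ℕ :=
  (Finset.univ.filter (fun x => KL π hn x v)).card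

lemma rnk_lt (π : Fin n → Fin n) (hn : 0 < n) {x y : Fin n} (h : KL π hn x y) :
    rnk π hn x < rnk π hn y := by
  apply Finset.card_lt_card
  have hsub : Finset.univ.filter (fun z => KL π hn z x)
      ⊆ Finset.univ.filter (fun z => KL π hn z y) := by
    intro z hz
    rw [Finset.mem_filter] at hz ⊢
    exact ⟨hz.1, KL_trans π hn hz.2 h⟩
  refine (Finset.ssubset_iff_of_subset hsub).mpr ?_
  refine ⟨x, ?_, ?_⟩
  · rw [Finset.mem_filter]; exact ⟨Finset.mem_univ _, h⟩
  · rw [Finset.mem_filter]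
    rintro ⟨-, hxx⟩
    exact KL_irrefl π hn x hxx

lemma rnk_lt_n (π : Fin n → Fin n) (hn : 0 < n) (v : Fin n) : rnk π hn v < n := by
  have hsub : Finset.univ.filter (fun z => KL π hn z v) ⊆ Finset.univ.erase v := by
    intro z hz
    rw [Finset.mem_filter] at hz
    rw [Finset.mem_erase]
    refine ⟨?_, Finset.mem_univ _⟩
    intro e
    rw [e] at hz
    exact KL_irrefl π hn v hz.2
  have := Finset.card_le_card hsub
  rw [Finset.card_erase_of_mem (Finset.mem_univ v), Finset.card_univ,
    Fintype.card_fin] at this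
  unfold rnk; omega

/-- The concrete embedding of the permutation graph into `Hgraph k n`. -/
lemma concrete (π : Fin n → Fin n) (hn : 0 < n) (hπi : Function.Injective π)
    (hconn : (permGraph π).Connected) (c : Fin n → Bool)
    (hc : ∀ u v, (permGraph π).Adj u v → c u ≠ c v) {k : ℕ}
    (hfree : ¬ IsInducedSubgraph (pathN k) (permGraph π)) :
    IsInducedSubgraph (permGraph π) (Hgraph k n) := by
  have hlvk : ∀ v, lv π hn v + 1 < k := lv_add_one_lt π hn hconn c hc hfree
  have hku : ∀ x, lv π hn x < k := fun x => by have := hlvk x; omega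
  refine ⟨fun v => (⟨lv π hn v, hku v⟩,
    ⟨rnk π hn v, rnk_lt_n π hn v⟩), ?_, ?_⟩
  · intro u v huv
    have huv2 : ((⟨lv π hn u, hku u⟩ : Fin k), (⟨rnk π hn u, rnk_lt_n π hn u⟩ : Fin n))
        = ((⟨lv π hn v, hku v⟩ : Fin k), (⟨rnk π hn v, rnk_lt_n π hn v⟩ : Fin n)) := huv
    clear huv
    rename' huv2 => huv
    simp only [Prod.mk.injEq, Fin.mk.injEq] at huv
    by_contra hne
    rcases KL_total π hn hne with h | h
    · have := rnk_lt π hn h; omega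
    · have := rnk_lt π hn h; omega
  · intro u v
    constructor
    · intro hadj
      have hadj2 : (Hgraph k n).Adj
          ((⟨lv π hn u, hku u⟩ : Fin k), (⟨rnk π hn u, rnk_lt_n π hn u⟩ : Fin n))
          ((⟨lv π hn v, hku v⟩ : Fin k), (⟨rnk π hn v, rnk_lt_n π hn v⟩ : Fin n)) := hadj
      clear hadj
      rename' hadj2 => hadj
      unfold Hgraph at hadj
      rw [SimpleGraph.fromRel_adj] at hadj
      obtain ⟨hne, hrel⟩ := hadj
      simp only [Fin.mk.injEq] at hrel
      rcases hrel with ⟨hl, hr⟩ | ⟨hl, hr⟩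
      · by_contra hnadj
        have hlt := pos_lt_of_nonadj π hn hπi hconn c hc hnadj (by omega)
        have hKL : KL π hn u v := Or.inl hlt
        have := rnk_lt π hn hKL
        omega
      · by_contra hnadj
        have hlt := pos_lt_of_nonadj π hn hπi hconn c hc
          (fun h => hnadj h.symm) (by omega)
        have hKL : KL π hn v u := Or.inl hlt
        have := rnk_lt π hn hKL
        omega
    · intro hadj
      show (Hgraph k n).Adj
          ((⟨lv π hn u, hku u⟩ : Fin k), (⟨rnk π hn u, rnk_lt_n π hn u⟩ : Fin n))
          ((⟨lv π hn v, hku v⟩ : Fin k), (⟨rnk π hn v, rnk_lt_n π hn v⟩ : Fin n))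
      unfold Hgraph
      rw [SimpleGraph.fromRel_adj]
      rcases adj_lv_succ π hn hconn c hc hadj with h | h
      · refine ⟨?_, Or.inl ⟨by simp [h], ?_⟩⟩
        · intro e
          simp only [Prod.mk.injEq, Fin.mk.injEq] at e
          omega
        · have hle := pos_le_of_adj π hn hconn hadj h
          have hKL : KL π hn v u := by
            rcases lt_or_eq_of_le hle with hlt | heq
            · exact Or.inl hlt
            · exact Or.inr ⟨heq, Or.inl (by omega)⟩
          have := rnk_lt π hn hKL
          show rnk π hn v ≤ rnk π hn u
          omega
      · refine ⟨?_, Or.inr ⟨by simp [h], ?_⟩⟩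
        · intro e
          simp only [Prod.mk.injEq, Fin.mk.injEq] at e
          omega
        · have hle := pos_le_of_adj π hn hconn hadj.symm h
          have hKL : KL π hn u v := by
            rcases lt_or_eq_of_le hle with hlt | heq
            · exact Or.inl hlt
            · exact Or.inr ⟨heq, Or.inl (by omega)⟩
          have := rnk_lt π hn hKL
          show rnk π hn u ≤ rnk π hn v
          omega

end

end BPG
/-- For every `k ≥ 1`, every connected `P_k`-free bipartite
permutation graph on `n` vertices is isomorphic to an induced subgraph of
`H_{k,n}`. -/
theorem connected_pk_free_bip_perm_embeds_in_Hgraph (k : ℕ) (hk : 1 ≤ k)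
    (V : Type) [Fintype V] (G : SimpleGraph V) (hconn : G.Connected)
    (hbip : IsBipartite G) (hperm : IsPermutationGraph G)
    (hpk : HFree (pathN k) G) :
    IsInducedSubgraph G (Hgraph k (Fintype.card V)) := by
  obtain ⟨n, π, hπbij, ⟨e⟩⟩ := hperm
  have hcard : Fintype.card V = n := by
    rw [← Fintype.card_fin n]
    exact Fintype.card_congr e.toEquiv
  subst hcard
  obtain ⟨cV, hcV⟩ := hbip
  have hn : 0 < Fintype.card V := Fintype.card_pos_iff.mpr hconn.nonempty
  have hconn' : (permGraph π).Connected := e.connected_iff.mp hconn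
  have hc : ∀ u v, (permGraph π).Adj u v → cV (e.symm u) ≠ cV (e.symm v) := by
    intro u v h
    apply hcV
    exact (SimpleGraph.Iso.map_adj_iff e.symm).mpr h
  have hfree : ¬ IsInducedSubgraph (pathN k) (permGraph π) := by
    rintro ⟨f, hfinj, hfadj⟩
    apply hpk
    refine ⟨fun i => e.symm (f i), ?_, ?_⟩
    · exact e.symm.toEquiv.injective.comp hfinj
    · intro a b
      rw [SimpleGraph.Iso.map_adj_iff e.symm]
      exact hfadj a b
  obtain ⟨F, hFinj, hFadj⟩ :=
    BPG.concrete π hn hπbij.injective hconn' (fun x => cV (e.symm x)) hc hfree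
  refine ⟨fun v => F (e v), ?_, ?_⟩
  · intro a b hab
    exact e.toEquiv.injective (hFinj hab)
  · intro a b
    rw [hFadj (e a) (e b)]
    exact SimpleGraph.Iso.map_adj_iff e
end

section
/- For all positive integers k and n, the graph H_{k,n} is a k-letter graph: there is a partition of its vertex set into at most k independent sets (namely the rows V_i = {(i, 1), ..., (i, n)}) and a linear order L on its vertex set such that for every pair of distinct rows, the set of edges between them equals one of { uv : u in the one row, v in the other, u <_L v }, the reverse, all pairs, or the empty set. -/
lemma Hgraph_adj_iff (k n : ℕ) (u v : Fin k × Fin n) :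
    (Hgraph k n).Adj u v ↔
      ((v.1.val = u.1.val + 1 ∧ v.2.val ≤ u.2.val) ∨
       (u.1.val = v.1.val + 1 ∧ u.2.val ≤ v.2.val)) := by
  rw [Hgraph, SimpleGraph.fromRel_adj]
  constructor
  · rintro ⟨_, h | h⟩
    · exact Or.inl ⟨h.1, h.2⟩
    · exact Or.inr ⟨h.1, h.2⟩
  · rintro (h | h)
    · exact ⟨fun he => by rw [he] at h; omega, Or.inl ⟨h.1, Fin.mk_le_mk.mpr h.2⟩⟩
    · exact ⟨fun he => by rw [he] at h; omega, Or.inr ⟨h.1, Fin.mk_le_mk.mpr h.2⟩⟩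

lemma mul_succ_lt_iff (c a b : ℕ) : a * (c + 1) < b * (c + 1) + 1 ↔ a ≤ b := by
  constructor
  · intro h
    by_contra hab
    have : b + 1 ≤ a := by omega
    have h2 := Nat.mul_le_mul_right (c + 1) this
    rw [Nat.add_mul, one_mul] at h2
    omega
  · intro h
    have := Nat.mul_le_mul_right (c + 1) h
    omega

/-- For all positive integers `k` and `n`, the graph `H_{k,n}` is
a `k`-letter graph. -/
theorem Hgraph_is_kletter (k n : ℕ) (hk : 0 < k) (hn : 0 < n) :
    IsKLetterGraph k (Hgraph k n) := by
  refine ⟨k, le_refl k, fun v => v.1,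
    fun v => (k - v.1.val) + v.2.val * (k + 1), ?_, ?_, ?_⟩
  · intro u v h
    simp only at h
    have h1 : k - u.1.val = k - v.1.val := by
      have := congrArg (· % (k + 1)) h
      simpa [Nat.add_mul_mod_self_right,
        Nat.mod_eq_of_lt (show k - u.1.val < k + 1 by omega),
        Nat.mod_eq_of_lt (show k - v.1.val < k + 1 by omega)] using this
    have hu1 := u.1.isLt
    have hv1 := v.1.isLt
    have h2 : u.1.val = v.1.val := by omega
    have h3 : u.2.val * (k + 1) = v.2.val * (k + 1) := by omega
    have h4 : u.2.val = v.2.val := Nat.eq_of_mul_eq_mul_right (by omega) h3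
    exact Prod.ext (Fin.ext h2) (Fin.ext h4)
  · intro i
    right
    intro u v hu hv hadj
    rw [Hgraph_adj_iff] at hadj
    simp only at hu hv
    have : u.1.val = v.1.val := by rw [hu, hv]
    omega
  · intro i j hij
    by_cases h1 : j.val = i.val + 1
    · right; left
      intro u v hu hv
      simp only at hu hv
      have hjk := j.isLt
      subst hu; subst hv
      rw [Hgraph_adj_iff]
      beta_reduce
      have := mul_succ_lt_iff k v.2.val u.2.val
      constructor
      · rintro (h | h) <;> omega
      · intro h
        left
        refine ⟨h1, ?_⟩
        omega
    · by_cases h2 : i.val = j.val + 1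
      · left
        intro u v hu hv
        simp only at hu hv
        have hik := i.isLt
        subst hu; subst hv
        rw [Hgraph_adj_iff]
        beta_reduce
        have := mul_succ_lt_iff k u.2.val v.2.val
        constructor
        · rintro (h | h) <;> omega
        · intro h
          right
          refine ⟨h2, ?_⟩
          omega
      · right; right; right
        intro u v hu hv hadj
        rw [Hgraph_adj_iff] at hadj
        simp only at hu hv
        subst hu; subst hv
        omega
end

section
/- For every fixed k ≥ 1, the class of P_k-free bipartite permutation graphs is well-quasi-ordered by the induced subgraph relation: for every infinite sequence G_0, G_1, G_2, ... of finite P_k-free bipartite permutation graphs, there exist indices i < j such that G_i is isomorphic to an induced subgraph of G_j. -/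
/-!
Let the level of a vertex of a bipartite permutation graph be its distance from the smallest
vertex of its component. Adjacent vertices differ in level by exactly one, and since shortest
paths are induced, `P_k`-freeness bounds every level by `k - 2`. Each component can be listed so
that two vertices are adjacent exactly when the earlier one is one level above the later one: such
a listing is a linear extension of the relation `PermGraph.Arc`, which is acyclic because a cycle
can always be shortened at a vertex of maximal level. So the graph is encoded by a list of words
over `{0, …, k - 2}`, one per component, and embedding such codes word into word yields induced
embeddings of the graphs. Higman's lemma, applied to words and then to lists of words, concludes.
-/

section

open SimpleGraph

theorem IsInducedSubgraph.trans {α β γ : Type*} {A : SimpleGraph α} {B : SimpleGraph β}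
    {C : SimpleGraph γ} (hAB : IsInducedSubgraph A B) (hBC : IsInducedSubgraph B C) :
    IsInducedSubgraph A C := by
  obtain ⟨f, hf, hfadj⟩ := hAB
  obtain ⟨g, hg, hgadj⟩ := hBC
  exact ⟨g ∘ f, hg.comp hf, fun u v => (hgadj _ _).trans (hfadj u v)⟩

theorem SimpleGraph.Iso.isInducedSubgraph {α β : Type*} {G : SimpleGraph α} {H : SimpleGraph β}
    (e : G ≃g H) : IsInducedSubgraph G H :=
  ⟨e, e.injective, fun _ _ => e.map_rel_iff⟩

namespace SimpleGraph

variable {V : Type*} {G : SimpleGraph V} {u v w : V}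

lemma Walk.dist_getVert_of_length_eq_dist (p : G.Walk u v) (hp : p.length = G.dist u v)
    {i : ℕ} (hi : i ≤ p.length) : G.dist u (p.getVert i) = i := by
  have := length_eq_dist_of_subwalk hp (p.isSubwalk_take i)
  rwa [Walk.take_length, min_eq_left hi, eq_comm] at this

lemma Reachable.exists_adj_dist_eq (hr : G.Reachable u v) {d : ℕ} (hd : G.dist u v = d + 1) :
    ∃ w, G.Adj w v ∧ G.dist u w = d := by
  obtain ⟨p, hp⟩ := hr.exists_walk_length_eq_dist
  refine ⟨p.getVert d, ?_, p.dist_getVert_of_length_eq_dist hp (by omega)⟩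
  simpa [p.getVert_of_length_le (i := d + 1) (by omega)] using
    p.adj_getVert_succ (i := d) (by omega)

lemma Coloring.dist_eq_add_one_or (c : G.Coloring Bool) (h : G.Adj v w) (hr : G.Reachable u v) :
    G.dist u w = G.dist u v + 1 ∨ G.dist u v = G.dist u w + 1 := by
  have hne : G.dist u v ≠ G.dist u w := by
    intro heq
    obtain ⟨p, hp⟩ := hr.exists_walk_length_eq_dist
    obtain ⟨q, hq⟩ := (hr.trans h.reachable).exists_walk_length_eq_dist
    have hvw : (c u ↔ c v) ↔ (c u ↔ c w) := by
      rw [← c.even_length_iff_congr p, ← c.even_length_iff_congr q, hp, hq, heq]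
    apply c.valid h
    revert hvw
    generalize c u = a; generalize c v = b; generalize c w = d
    cases a <;> cases b <;> cases d <;> simp
  rcases h.diff_dist_adj (u := u) with h | h | h <;> omega

lemma Reachable.dist_add_one_lt_of_hFree {k : ℕ} (hG : HFree (pathN k) G)
    (hr : G.Reachable u v) : G.dist u v + 1 < k := by
  by_contra! hk
  obtain ⟨p, hp⟩ := hr.exists_walk_length_eq_dist
  have hdist (i : Fin k) : G.dist u (p.getVert i) = i :=
    p.dist_getVert_of_length_eq_dist hp (by have := i.isLt; omega)
  refine hG ⟨fun i => p.getVert i, fun i j hij => Fin.ext ?_, fun i j => ?_⟩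
  · simpa [hdist] using congrArg (G.dist u) hij
  rw [pathN, fromRel_adj, ne_eq, Fin.ext_iff]
  constructor
  · intro hadj
    have hne : (i : ℕ) ≠ j := fun hij => hadj.ne (by simp [hij])
    have := hadj.diff_dist_adj (u := u)
    rw [hdist, hdist] at this
    exact ⟨hne, by omega⟩
  · rintro ⟨-, h | h⟩
    · simpa [← h] using p.adj_getVert_succ (i := i) (by omega)
    · simpa [← h] using (p.adj_getVert_succ (i := j) (by omega)).symm

end SimpleGraph

theorem List.exists_isRotated_cons_of_mem {α : Type*} {l : List α} {y : α} (hy : y ∈ l) :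
    ∃ t, l ~r y :: t := by
  obtain ⟨p, s, rfl⟩ := List.append_of_mem hy
  exact ⟨s ++ p, List.isRotated_append⟩

section Shortcut

variable {α : Type*} {R : α → α → Prop} (h : α → ℕ)

theorem Cycle.not_chain_cons_of_shortcut (irrefl : ∀ x, ¬ R x x)
    (shortcut : ∀ x y z, R x y → R y z → h x ≤ h y → h z ≤ h y → R x z) (l : List α) (x : α) :
    ¬ Cycle.Chain R ↑(x :: l) := by
  induction hn : l.length using Nat.strong_induction_on generalizing l x with
  | _ m ih =>
  intro hx
  -- rotate the cycle to start at a vertex `y` of maximal height, then cut `y` out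
  obtain ⟨y, hy, hmax⟩ := Set.exists_max_image {a | a ∈ x :: l} h (List.finite_toSet _)
    ⟨x, List.mem_cons_self⟩
  obtain ⟨t, hrot⟩ := List.exists_isRotated_cons_of_mem hy
  have hlen : t.length = m := by simpa [hn] using hrot.perm.length_eq.symm
  have hmax' : ∀ b ∈ y :: t, h b ≤ h y := fun b hb => hmax b (hrot.mem_iff.2 hb)
  rw [Cycle.coe_eq_coe.2 hrot] at hx
  rcases t with _ | ⟨z, t⟩
  · exact irrefl y ((Cycle.chain_singleton R y).1 hx)
  rw [Cycle.chain_coe_cons, List.cons_append, List.isChain_cons_cons, ← List.cons_append,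
    List.isChain_append] at hx
  obtain ⟨hyz, hzt, -, hwy⟩ := hx
  have hw := List.getLast_mem (List.cons_ne_nil z t)
  refine ih t.length (by simp at hlen; omega) t z rfl ((Cycle.chain_coe_cons _ _ _).2 ?_)
  rw [← List.cons_append]
  refine hzt.append (List.isChain_singleton z) ?_
  simp only [List.getLast?_eq_some_getLast (List.cons_ne_nil z t), Option.mem_def,
    Option.some.injEq, List.head?_cons, forall_eq']
  exact shortcut _ y z (hwy _ (by simp [List.getLast?_eq_some_getLast]) y rfl) hyz
    (hmax' _ (List.mem_cons_of_mem _ hw)) (hmax' _ (by simp))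

theorem Relation.not_transGen_self_of_shortcut (irrefl : ∀ x, ¬ R x x)
    (shortcut : ∀ x y z, R x y → R y z → h x ≤ h y → h z ≤ h y → R x z) (x : α) :
    ¬ Relation.TransGen R x x := by
  intro hx
  obtain ⟨y, hxy, hyx⟩ := Relation.TransGen.tail'_iff.1 hx
  obtain ⟨l, hl, hlast⟩ := List.exists_isChain_cons_of_relationReflTransGen hxy
  refine Cycle.not_chain_cons_of_shortcut h irrefl shortcut l x ((Cycle.chain_coe_cons _ _ _).2 ?_)
  rw [← List.cons_append]
  exact hl.append (List.isChain_singleton x) (by simp [List.getLast?_eq_some_getLast, hlast, hyx])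

end Shortcut

theorem exists_injective_key_of_acyclic {α : Type*} [Fintype α] [LinearOrder α]
    {R : α → α → Prop} (hR : ∀ x, ¬ Relation.TransGen R x x) :
    ∃ key : α → ℕ ×ₗ α, Function.Injective key ∧ ∀ x y, R x y → key x < key y := by
  classical
  -- rank a vertex by its number of `R`-ancestors, breaking ties by the order of `α`
  let ancestors (x : α) := Finset.univ.filter (Relation.TransGen R · x)
  refine ⟨fun x => toLex ((ancestors x).card, x),
    fun x y hxy => congrArg (fun p => (ofLex p).2) hxy,
    fun x y hxy => Prod.Lex.lt_iff.2 (Or.inl (Finset.card_lt_card ?_))⟩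
  refine (Finset.ssubset_iff_of_subset fun w hw => ?_).2 ⟨x, ?_, ?_⟩
  · simp only [ancestors, Finset.mem_filter, Finset.mem_univ, true_and] at hw ⊢
    exact hw.tail hxy
  · simpa [ancestors] using Relation.TransGen.single hxy
  · simpa [ancestors] using hR x

/-- The graph of a list of words: its vertices are the positions `(i, r)` of letters, and two
letters are adjacent when they lie in the same word and the earlier one is larger by one. -/
def codeGraph (L : List (List ℕ)) : SimpleGraph {p : ℕ × ℕ // p.2 < (L.getD p.1 []).length} :=
  SimpleGraph.fromRel fun p q => p.1.1 = q.1.1 ∧ p.1.2 < q.1.2 ∧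
    (L.getD p.1.1 []).getD p.1.2 0 = (L.getD q.1.1 []).getD q.1.2 0 + 1

theorem codeGraph_isInducedSubgraph {L L' : List (List ℕ)} (a : ℕ ↪ ℕ) (b : ℕ → ℕ ↪o ℕ)
    (hab : ∀ i r, (L.getD i [])[r]? = (L'.getD (a i) [])[b i r]?) :
    IsInducedSubgraph (codeGraph L) (codeGraph L') := by
  have hlen (p : {p : ℕ × ℕ // p.2 < (L.getD p.1 []).length}) :
      b p.1.1 p.1.2 < (L'.getD (a p.1.1) []).length := by
    have := hab p.1.1 p.1.2
    rw [List.getElem?_eq_getElem p.2] at this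
    exact (List.getElem?_eq_some_iff.1 this.symm).1
  have hletter (i r : ℕ) : (L.getD i []).getD r 0 = (L'.getD (a i) []).getD (b i r) 0 := by
    rw [List.getD_eq_getElem?_getD (l := L.getD i []),
      List.getD_eq_getElem?_getD (l := L'.getD (a i) []), hab]
  let F (p : {p : ℕ × ℕ // p.2 < (L.getD p.1 []).length}) :
      {p : ℕ × ℕ // p.2 < (L'.getD p.1 []).length} := ⟨(a p.1.1, b p.1.1 p.1.2), hlen p⟩
  have hF : Function.Injective F := by
    rintro ⟨⟨i, r⟩, hp⟩ ⟨⟨j, s⟩, hq⟩ h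
    simp only [F, Subtype.mk.injEq, Prod.mk.injEq] at h
    obtain rfl := a.injective h.1
    obtain rfl := (b i).injective h.2
    rfl
  refine ⟨F, hF, fun p q => ?_⟩
  rw [codeGraph, codeGraph, fromRel_adj, fromRel_adj, hF.ne_iff]
  obtain ⟨⟨i, r⟩, hp⟩ := p
  obtain ⟨⟨j, s⟩, hq⟩ := q
  simp only [F, a.injective.eq_iff]
  by_cases hij : i = j
  · subst hij
    simp only [(b i).lt_iff_lt, hletter, true_and]
  · simp [hij, Ne.symm hij]

theorem exists_orderEmbedding_getElem?_eq_of_sublistForall₂ {L L' : List (List ℕ)}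
    (h : List.SublistForall₂ (List.SublistForall₂ (· = ·)) L L') :
    ∃ (a : ℕ ↪o ℕ) (b : ℕ → ℕ ↪o ℕ), ∀ i r, (L.getD i [])[r]? = (L'.getD (a i) [])[b i r]? := by
  obtain ⟨M, hLM, hML⟩ := List.sublistForall₂_iff.1 h
  obtain ⟨a, ha⟩ := List.sublist_iff_exists_orderEmbedding_getElem?_eq.1 hML
  have hsub (i : ℕ) : (L.getD i []).Sublist (L'.getD (a i) []) := by
    have hi : List.SublistForall₂ (· = ·) (L.getD i []) (M.getD i []) := by
      by_cases hi : i < L.length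
      · rw [List.getD_eq_getElem _ _ hi, List.getD_eq_getElem _ _ (hLM.length_eq ▸ hi)]
        exact hLM.get hi (hLM.length_eq ▸ hi)
      · rw [List.getD_eq_default _ _ (by omega)]
        exact .nil
    have hM : M.getD i [] = L'.getD (a i) [] := by simp only [List.getD_eq_getElem?_getD, ha]
    obtain ⟨w, hw, hw'⟩ := List.sublistForall₂_iff.1 hi
    rw [List.forall₂_eq_eq_eq] at hw
    rwa [hw, ← hM]
  choose b hb using fun i => List.sublist_iff_exists_orderEmbedding_getElem?_eq.1 (hsub i)
  exact ⟨a, b, hb⟩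

theorem codeGraph_isInducedSubgraph_of_sublistForall₂ {L L' : List (List ℕ)}
    (h : List.SublistForall₂ (List.SublistForall₂ (· = ·)) L L') :
    IsInducedSubgraph (codeGraph L) (codeGraph L') :=
  let ⟨a, b, hab⟩ := exists_orderEmbedding_getElem?_eq_of_sublistForall₂ h
  codeGraph_isInducedSubgraph a.toEmbedding b hab

theorem exists_lt_sublistForall₂ (k : ℕ) (L : ℕ → List (List ℕ))
    (hL : ∀ m, ∀ w ∈ L m, ∀ x ∈ w, x < k) :
    ∃ i j, i < j ∧ List.SublistForall₂ (List.SublistForall₂ (· = ·)) (L i) (L j) := by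
  have hletters : (Set.Iio k).PartiallyWellOrderedOn (· = ·) :=
    (Set.finite_Iio k).partiallyWellOrderedOn
  have hwords := hletters.partiallyWellOrderedOn_sublistForall₂ (· = ·)
  have : IsPreorder (List ℕ) (List.SublistForall₂ (· = ·)) := {}
  have hcodes := hwords.partiallyWellOrderedOn_sublistForall₂ (List.SublistForall₂ (· = ·))
  exact hcodes.exists_lt fun m w hw x hx => hL m w hw x hx

section LevelCode

variable {V K : Type*} [Fintype V] [LinearOrder K] (comp level : V → ℕ) (key : V → K)

noncomputable def sortedClass (c : ℕ) : List V :=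
  (Finset.univ.filter (comp · = c)).toList.mergeSort (fun u v => key u ≤ key v)

noncomputable def levelCode : List (List ℕ) :=
  (List.range (Finset.univ.sup comp + 1)).map fun c => (sortedClass comp key c).map level

variable {comp level key}

lemma mem_sortedClass {c : ℕ} {v : V} : v ∈ sortedClass comp key c ↔ comp v = c := by
  simp [sortedClass]

lemma nodup_sortedClass (c : ℕ) : (sortedClass comp key c).Nodup :=
  (List.mergeSort_perm _ _).nodup_iff.2 (Finset.nodup_toList _)

lemma key_sortedClass_lt_iff (hkey : Function.Injective key) {c r s : ℕ}
    (hr : r < (sortedClass comp key c).length) (hs : s < (sortedClass comp key c).length) :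
    key (sortedClass comp key c)[r] < key (sortedClass comp key c)[s] ↔ r < s := by
  have hsorted : ((sortedClass comp key c).map key).SortedLT := by
    rw [List.sortedLT_iff_nodup_and_sortedLE, List.sortedLE_iff_pairwise, List.pairwise_map]
    refine ⟨(nodup_sortedClass c).map hkey, ?_⟩
    simpa [sortedClass] using List.pairwise_mergeSort (le := fun u v => key u ≤ key v)
      (by simpa using fun _ _ _ => le_trans) (by simpa using fun a b => le_total (key a) (key b)) _
  have := hsorted.getElem_lt_getElem_iff (i := r) (j := s) (hi := by simpa using hr)
    (hj := by simpa using hs)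
  simpa only [List.getElem_map] using this

lemma getD_levelCode (c : ℕ) :
    (levelCode comp level key).getD c [] = (sortedClass comp key c).map level := by
  rw [levelCode, List.getD_eq_getElem?_getD, List.getElem?_map]
  by_cases hc : c < Finset.univ.sup comp + 1
  · simp [List.getElem?_range hc]
  · have hnil : sortedClass comp key c = [] := List.eq_nil_iff_forall_not_mem.2 fun v hv => hc <| by
      have := Finset.le_sup (f := comp) (Finset.mem_univ v)
      rw [mem_sortedClass.1 hv] at this
      omega
    rw [List.getElem?_eq_none (by rw [List.length_range]; omega), hnil]
    rfl

theorem nonempty_iso_codeGraph_levelCode (G : SimpleGraph V) (hkey : Function.Injective key)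
    (hadj : ∀ u v, G.Adj u v ↔ comp u = comp v ∧
      (key u < key v ∧ level u = level v + 1 ∨ key v < key u ∧ level v = level u + 1)) :
    Nonempty (G ≃g codeGraph (levelCode comp level key)) := by
  have hlen (p : {p : ℕ × ℕ // p.2 < ((levelCode comp level key).getD p.1 []).length}) :
      p.1.2 < (sortedClass comp key p.1.1).length := by
    simpa only [getD_levelCode, List.length_map] using p.2
  let F p : V := (sortedClass comp key p.1.1)[p.1.2]'(hlen p)
  have hcomp p : comp (F p) = p.1.1 := mem_sortedClass.1 (List.getElem_mem _)
  have hlevel p : ((levelCode comp level key).getD p.1.1 []).getD p.1.2 0 = level (F p) := by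
    rw [getD_levelCode, List.getD_eq_getElem _ _ (by simpa using hlen p), List.getElem_map]
  have hinj : Function.Injective F := by
    rintro ⟨⟨c, r⟩, hr⟩ ⟨⟨d, s⟩, hs⟩ h
    obtain rfl : c = d := (hcomp _).symm.trans ((congrArg comp h).trans (hcomp _))
    obtain rfl : r = s := (nodup_sortedClass c).getElem_inj_iff.1 h
    rfl
  have hsurj : Function.Surjective F := by
    intro v
    obtain ⟨r, hr, hv⟩ :=
      List.getElem_of_mem (mem_sortedClass (key := key).2 (rfl : comp v = comp v))
    exact ⟨⟨(comp v, r), by simpa only [getD_levelCode, List.length_map] using hr⟩, hv⟩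
  refine ⟨RelIso.symm ⟨Equiv.ofBijective F ⟨hinj, hsurj⟩, fun {p q} => ?_⟩⟩
  change G.Adj (F p) (F q) ↔ _
  rw [hadj, codeGraph, fromRel_adj, hcomp, hcomp, hlevel, hlevel]
  obtain ⟨⟨c, r⟩, hr⟩ := p
  obtain ⟨⟨d, s⟩, hs⟩ := q
  by_cases hcd : c = d
  · subst hcd
    simp only [F, key_sortedClass_lt_iff hkey, true_and, ne_eq, Subtype.mk.injEq, Prod.mk.injEq]
    refine ⟨fun h => ⟨?_, h⟩, And.right⟩
    rcases h with h | h <;> omega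
  · simp [hcd, Ne.symm hcd]

end LevelCode

namespace PermGraph

variable {n : ℕ} {σ : Fin n → Fin n} {u v w x y z : Fin n}

def LowerLeft (σ : Fin n → Fin n) (x y : Fin n) : Prop := x < y ∧ σ x < σ y

lemma permGraph_adj : (permGraph σ).Adj x y ↔ x ≠ y ∧ (x < y ∧ σ y < σ x ∨ y < x ∧ σ x < σ y) :=
  fromRel_adj _ _ _

lemma LowerLeft.trans (hxy : LowerLeft σ x y) (hyz : LowerLeft σ y z) : LowerLeft σ x z :=
  ⟨hxy.1.trans hyz.1, hxy.2.trans hyz.2⟩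

lemma LowerLeft.not_adj (h : LowerLeft σ x y) : ¬ (permGraph σ).Adj x y := by
  rw [permGraph_adj]
  rintro ⟨-, h' | h'⟩
  · exact h'.2.not_gt h.2
  · exact h'.1.not_gt h.1

lemma adj_or_lowerLeft_or_lowerLeft (hσ : Function.Injective σ) (hne : x ≠ y) :
    (permGraph σ).Adj x y ∨ LowerLeft σ x y ∨ LowerLeft σ y x := by
  rw [permGraph_adj, LowerLeft, LowerLeft]
  rcases lt_or_gt_of_ne hne with h | h <;> rcases lt_or_gt_of_ne (hσ.ne hne) with h' | h' <;>
    tauto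

variable (σ) in
noncomputable def root (v : Fin n) : Fin n :=
  (Set.toFinite {w | (permGraph σ).Reachable v w}).toFinset.min' ⟨v, by simp⟩

lemma reachable_root (v : Fin n) : (permGraph σ).Reachable v (root σ v) := by
  have h := Finset.min'_mem (Set.toFinite {w | (permGraph σ).Reachable v w}).toFinset ⟨v, by simp⟩
  rwa [Set.Finite.mem_toFinset] at h

lemma root_le (h : (permGraph σ).Reachable v w) : root σ v ≤ w :=
  Finset.min'_le _ _ ((Set.toFinite {w | (permGraph σ).Reachable v w}).mem_toFinset.2 h)

lemma root_eq_of_reachable (h : (permGraph σ).Reachable u v) : root σ u = root σ v :=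
  le_antisymm (root_le (h.trans (reachable_root v))) (root_le (h.symm.trans (reachable_root u)))

variable (σ) in
noncomputable def level (v : Fin n) : ℕ := (permGraph σ).dist (root σ v) v

theorem level_le_of_lowerLeft (hσ : Function.Injective σ) (hr : root σ u = root σ v)
    (h : LowerLeft σ u v) : level σ u ≤ level σ v := by
  induction hd : level σ v generalizing u v with
  | zero =>
    -- `v` is the smallest vertex of its component, so nothing in it lies to its lower left
    have hv : root σ v = v := ((reachable_root v).symm.dist_eq_zero_iff).1 hd
    have hvu := root_le (σ := σ) (Reachable.refl u)
    rw [hr, hv] at hvu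
    exact absurd h.1 hvu.not_gt
  | succ d ih =>
    obtain ⟨w, hwv, hw⟩ := (reachable_root v).symm.exists_adj_dist_eq hd
    have hrw : root σ w = root σ v := root_eq_of_reachable hwv.reachable
    rcases eq_or_ne u w with rfl | huw
    · rw [level, hr, hw]
      omega
    rcases adj_or_lowerLeft_or_lowerLeft hσ huw with hadj | hlt | hlt
    · have := hadj.diff_dist_adj (u := root σ v)
      rw [level, hr]
      omega
    · exact (ih (hr.trans hrw.symm) hlt (by rw [level, hrw, hw])).trans (Nat.le_succ d)
    · exact absurd hwv (hlt.trans h).not_adj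

lemma level_eq_add_one_or (c : (permGraph σ).Coloring Bool) (h : (permGraph σ).Adj u v) :
    level σ v = level σ u + 1 ∨ level σ u = level σ v + 1 := by
  have hr := root_eq_of_reachable h.reachable
  rw [level, level, hr]
  exact c.dist_eq_add_one_or h (hr ▸ (reachable_root u).symm)

variable (σ) in
/-- The order constraints inside a component. The lower-left pairs on a common level are not
forced by adjacency, but they make the relation closed under `arc_shortcut`. -/
def Arc (x y : Fin n) : Prop :=
  root σ x = root σ y ∧ (LowerLeft σ x y ∧ level σ y ≤ level σ x + 1 ∨
    (permGraph σ).Adj x y ∧ level σ x = level σ y + 1)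

lemma arc_irrefl (x : Fin n) : ¬ Arc σ x x := by
  rintro ⟨-, ⟨h, -⟩ | ⟨h, -⟩⟩
  · exact lt_irrefl _ h.1
  · exact h.ne rfl

lemma arc_shortcut (hσ : Function.Injective σ) (c : (permGraph σ).Coloring Bool)
    (hxy : Arc σ x y) (hyz : Arc σ y z) (hx : level σ x ≤ level σ y) (hz : level σ z ≤ level σ y) :
    Arc σ x z := by
  obtain ⟨hrxy, hxy⟩ := hxy
  obtain ⟨hryz, hyz⟩ := hyz
  refine ⟨hrxy.trans hryz, ?_⟩
  rcases hxy with ⟨hxy, hlxy⟩ | ⟨-, hlxy⟩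
  swap
  · omega
  rcases hyz with ⟨hyz, hlyz⟩ | ⟨hyz, hlyz⟩
  · exact Or.inl ⟨hxy.trans hyz, by omega⟩
  have hxz : x ≠ z := by
    rintro rfl
    exact hxy.not_adj hyz.symm
  rcases adj_or_lowerLeft_or_lowerLeft hσ hxz with hadj | hlt | hlt
  · rcases level_eq_add_one_or c hadj with h | h
    · omega
    · exact Or.inr ⟨hadj, h⟩
  · exact Or.inl ⟨hlt, by omega⟩
  · exact absurd hyz.symm (hlt.trans hxy).not_adj

lemma not_transGen_arc (hσ : Function.Injective σ) (c : (permGraph σ).Coloring Bool)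
    (x : Fin n) : ¬ Relation.TransGen (Arc σ) x x :=
  Relation.not_transGen_self_of_shortcut (level σ) arc_irrefl
    (fun _ _ _ => arc_shortcut hσ c) x

lemma adj_of_key_lt {K : Type*} [LinearOrder K] (hσ : Function.Injective σ) {key : Fin n → K}
    (hkey : ∀ x y, Arc σ x y → key x < key y) (hr : root σ u = root σ v)
    (hk : key u < key v) (hl : level σ u = level σ v + 1) : (permGraph σ).Adj u v := by
  by_contra hnadj
  have hne : u ≠ v := by
    rintro rfl
    omega
  rcases adj_or_lowerLeft_or_lowerLeft hσ hne with h | h | h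
  · exact hnadj h
  · have := level_le_of_lowerLeft hσ hr h
    omega
  · exact hk.not_gt (hkey v u ⟨hr.symm, Or.inl ⟨h, by omega⟩⟩)

theorem permGraph_adj_iff_of_arc {K : Type*} [LinearOrder K] (hσ : Function.Injective σ)
    (c : (permGraph σ).Coloring Bool) {key : Fin n → K} (hkey : ∀ x y, Arc σ x y → key x < key y) :
    (permGraph σ).Adj u v ↔ (root σ u : ℕ) = root σ v ∧
      (key u < key v ∧ level σ u = level σ v + 1 ∨ key v < key u ∧ level σ v = level σ u + 1) := by
  rw [Fin.val_inj]
  constructor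
  · intro h
    have hr := root_eq_of_reachable h.reachable
    refine ⟨hr, ?_⟩
    rcases level_eq_add_one_or c h with hl | hl
    · exact Or.inr ⟨hkey _ _ ⟨hr.symm, Or.inr ⟨h.symm, hl⟩⟩, hl⟩
    · exact Or.inl ⟨hkey _ _ ⟨hr, Or.inr ⟨h, hl⟩⟩, hl⟩
  · rintro ⟨hr, ⟨hk, hl⟩ | ⟨hk, hl⟩⟩
    · exact adj_of_key_lt hσ hkey hr hk hl
    · exact (adj_of_key_lt hσ hkey hr.symm hk hl).symm

theorem exists_iso_codeGraph {k : ℕ} (hσ : Function.Injective σ)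
    (c : (permGraph σ).Coloring Bool) (hk : HFree (pathN k) (permGraph σ)) :
    ∃ L : List (List ℕ), (∀ w ∈ L, ∀ x ∈ w, x + 1 < k) ∧ Nonempty (permGraph σ ≃g codeGraph L) := by
  obtain ⟨key, hkeyinj, hkey⟩ := exists_injective_key_of_acyclic (not_transGen_arc hσ c)
  refine ⟨levelCode (fun v => (root σ v : ℕ)) (level σ) key, ?_,
    nonempty_iso_codeGraph_levelCode _ hkeyinj fun _ _ => permGraph_adj_iff_of_arc hσ c hkey⟩
  intro w hw x hx
  rw [levelCode, List.mem_map] at hw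
  obtain ⟨_, -, rfl⟩ := hw
  obtain ⟨v, -, rfl⟩ := List.mem_map.1 hx
  exact (reachable_root v).symm.dist_add_one_lt_of_hFree hk

end PermGraph

end

theorem IsPermutationGraph.exists_iso_codeGraph {V : Type*} {G : SimpleGraph V} {k : ℕ}
    (hbip : IsBipartite G) (hperm : IsPermutationGraph G) (hpk : HFree (pathN k) G) :
    ∃ L : List (List ℕ), (∀ w ∈ L, ∀ x ∈ w, x + 1 < k) ∧ Nonempty (G ≃g codeGraph L) := by
  obtain ⟨n, σ, hσ, ⟨e⟩⟩ := hperm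
  obtain ⟨c, hc⟩ := hbip
  have hpkσ : HFree (pathN k) (permGraph σ) := fun h => hpk (h.trans e.symm.isInducedSubgraph)
  obtain ⟨L, hL, ⟨f⟩⟩ := PermGraph.exists_iso_codeGraph hσ.injective
    (SimpleGraph.Coloring.mk (c ∘ e.symm) fun h => hc _ _ (e.symm.map_rel_iff.2 h)) hpkσ
  exact ⟨L, hL, ⟨e.trans f⟩⟩

theorem pk_free_bip_perm_wqo_general (k : ℕ)
    (V : ℕ → Type)
    (G : ∀ m, SimpleGraph (V m))
    (hbip : ∀ m, IsBipartite (G m))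
    (hperm : ∀ m, IsPermutationGraph (G m))
    (hpk : ∀ m, HFree (pathN k) (G m)) :
    ∃ i j, i < j ∧ IsInducedSubgraph (G i) (G j) := by
  choose L hL e using fun m => (hperm m).exists_iso_codeGraph (hbip m) (hpk m)
  obtain ⟨i, j, hij, hsub⟩ := exists_lt_sublistForall₂ k L fun m w hw x hx => by
    have := hL m w hw x hx
    omega
  exact ⟨i, j, hij, (e i).some.isInducedSubgraph.trans
    ((codeGraph_isInducedSubgraph_of_sublistForall₂ hsub).trans (e j).some.symm.isInducedSubgraph)⟩

/-- For every fixed `k ≥ 1`, the class of `P_k`-free bipartite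
permutation graphs is well-quasi-ordered by the induced subgraph relation. -/
theorem pk_free_bip_perm_wqo (k : ℕ) (hk : 1 ≤ k)
    (V : ℕ → Type) (inst : ∀ m, Fintype (V m))
    (G : ∀ m, SimpleGraph (V m))
    (hbip : ∀ m, IsBipartite (G m))
    (hperm : ∀ m, IsPermutationGraph (G m))
    (hpk : ∀ m, HFree (pathN k) (G m)) :
    ∃ i j, i < j ∧ IsInducedSubgraph (G i) (G j) :=
  pk_free_bip_perm_wqo_general k V G hbip hperm hpk
end
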